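/- arXiv:2405.09242 — 5 statements merged into one kernel-verified Lean document; each statement's English description precedes it below -/
import Mathlib

section
/- The Eulerian polynomial A_n(t) = Σ_{w ∈ S_n} t^{des(w)} equals Σ_{w ∈ S̃_n} t^{des(w)} (1+t)^{n-1-2·des(w)}, where S̃_n is the set of permutations in S_n with no double descent and no initial descent. -/
open Finset Polynomial

open scoped Classical

noncomputable section

/-- The letter (0-based) at 0-based position `i` in the one-line notation of `w`
(junk value `0` out of range). -/
def ol (n : ℕ) (w : Equiv.Perm (Fin n)) (i : ℕ) : ℕ :=
  if h : i < n then (w ⟨i, h⟩ : ℕ) else 0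

/-- The descent set of `w`, with 0-based positions: `i ∈ DesSet n w` (for `i ≤ n-2`)
means `w(i) > w(i+1)`.  (This is the paper's descent `i+1 ∈ [n-1]`.) -/
def DesSet (n : ℕ) (w : Equiv.Perm (Fin n)) : Finset ℕ :=
  (Finset.range (n - 1)).filter fun i => ol n w (i + 1) < ol n w i

/-- The number of descents of `w`. -/
def des (n : ℕ) (w : Equiv.Perm (Fin n)) : ℕ := (DesSet n w).card

/-- `w` has no double descent: no two consecutive descent positions. -/
def NoDoubleDescent (n : ℕ) (w : Equiv.Perm (Fin n)) : Prop :=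
  ∀ i ∈ DesSet n w, i + 1 ∉ DesSet n w

/-- `w` has no initial descent (no descent at the first position). -/
def NoInitialDescent (n : ℕ) (w : Equiv.Perm (Fin n)) : Prop := 0 ∉ DesSet n w

/-- `w` has no final descent (no descent at the last position, paper's `n-1`). -/
def NoFinalDescent (n : ℕ) (w : Equiv.Perm (Fin n)) : Prop := n - 2 ∉ DesSet n w

/-- The involution `w ↦ w*`, `w*(i) = n+1-w(n+1-i)` in 1-based notation. -/
def starPerm (n : ℕ) (w : Equiv.Perm (Fin n)) : Equiv.Perm (Fin n) :=
  (Fin.revPerm.trans w).trans Fin.revPerm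

/-- The letter at 1-based position `i ∈ [1,n]` of `w`, as an element of `ℕ∞`,
with the boundary convention `w(0) = w(n+1) = ⊤`. -/
def olb (n : ℕ) (w : Equiv.Perm (Fin n)) (i : ℕ) : ℕ∞ :=
  if h : 1 ≤ i ∧ i ≤ n then ((w ⟨i - 1, by omega⟩ : ℕ) : ℕ∞) else ⊤

/-- 1-based position `i` is a peak of `w` : `w(i-1) < w(i) > w(i+1)` (boundaries `⊤`,
so positions `1` and `n` are never peaks). -/
def IsPeak (n : ℕ) (w : Equiv.Perm (Fin n)) (i : ℕ) : Prop :=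
  olb n w (i - 1) < olb n w i ∧ olb n w (i + 1) < olb n w i

/-- 1-based position `i` is a valley of `w` : `w(i-1) > w(i) < w(i+1)`. -/
def IsValley (n : ℕ) (w : Equiv.Perm (Fin n)) (i : ℕ) : Prop :=
  olb n w i < olb n w (i - 1) ∧ olb n w i < olb n w (i + 1)

/-- 1-based position `i` holds a free letter of `w` : neither a peak nor a valley. -/
def IsFree (n : ℕ) (w : Equiv.Perm (Fin n)) (i : ℕ) : Prop :=
  ¬ IsPeak n w i ∧ ¬ IsValley n w i

/-- The number of peaks of `w`. -/
def pk (n : ℕ) (w : Equiv.Perm (Fin n)) : ℕ :=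
  ((Finset.Icc 1 n).filter (IsPeak n w)).card

/-- The number of inversions of `w`, i.e. its Coxeter length. -/
def invNum (n : ℕ) (w : Equiv.Perm (Fin n)) : ℕ :=
  (Finset.univ.filter fun p : Fin n × Fin n => p.1 < p.2 ∧ w p.2 < w p.1).card

/-- The standard parabolic subgroup `W_K` of `S_n` generated by the adjacent
transpositions `(k, k+1)` (1-based letters `k ∈ K`, i.e. 0-based `k-1`, `k`). -/
def WK (n : ℕ) (K : Finset ℕ) : Subgroup (Equiv.Perm (Fin n)) :=
  Subgroup.closure { s | ∃ k ∈ K, ∃ hk : k < n,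
    s = Equiv.swap (⟨k - 1, lt_of_le_of_lt (Nat.sub_le k 1) hk⟩ : Fin n) ⟨k, hk⟩ }

/-- The set `W^K` of permutations in which, for every `k ∈ K`, the letter `k`
appears before the letter `k+1` (1-based letters; these are the minimal-length
coset representatives of `W_K`). -/
def WKreps (n : ℕ) (K : Finset ℕ) : Finset (Equiv.Perm (Fin n)) :=
  Finset.univ.filter fun w => ∀ k ∈ K, ∀ hk : k < n,
    w⁻¹ (⟨k - 1, lt_of_le_of_lt (Nat.sub_le k 1) hk⟩ : Fin n) < w⁻¹ ⟨k, hk⟩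

/-- The set `W(K) = { v ∈ S_n : v⁻¹(k) − v⁻¹(k+1) ≤ 1 for all k ∈ K }`
(1-based letters `k`, `k+1`). -/
def Wset (n : ℕ) (K : Finset ℕ) : Finset (Equiv.Perm (Fin n)) :=
  Finset.univ.filter fun v => ∀ k ∈ K, ∀ hk : k < n,
    ((v⁻¹ (⟨k - 1, lt_of_le_of_lt (Nat.sub_le k 1) hk⟩ : Fin n) : Fin n) : ℕ) ≤
      ((v⁻¹ (⟨k, hk⟩ : Fin n) : Fin n) : ℕ) + 1

/-- The orbit of `i` under the action of `W_K` on positions/letters. -/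
def orbitFinset (n : ℕ) (K : Finset ℕ) (i : Fin n) : Finset (Fin n) :=
  Finset.univ.filter fun j => ∃ u ∈ WK n K, u i = j

/-- The set of orbits of `W_K` on `[n]`. -/
def orbitsFinset (n : ℕ) (K : Finset ℕ) : Finset (Finset (Fin n)) :=
  Finset.univ.image (orbitFinset n K)

/-- The one-line notation of `w` as a list of (0-based) letters. -/
def word (n : ℕ) (w : Equiv.Perm (Fin n)) : List ℕ := List.ofFn fun i => (w i : ℕ)

/-- A single valley hop of the free letter `j` from a downslope (in `v`) to the
nearest upslope of the same height (giving `u`): `j` moves rightwards directly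
across the adjacent valley `B`. -/
def hopStep (v u : List ℕ) : Prop :=
  ∃ (A B C : List ℕ) (j : ℕ), B ≠ [] ∧ (∀ x ∈ B, x < j) ∧
    (∀ x ∈ A.getLast?, j < x) ∧ (∀ x ∈ C.head?, j < x) ∧
    v = A ++ j :: (B ++ C) ∧ u = A ++ (B ++ j :: C)

/-- Hop equivalence (valley hopping) on `S_n`: the equivalence closure of single
hops of free letters. -/
def hopEquiv (n : ℕ) (a b : Equiv.Perm (Fin n)) : Prop :=
  Relation.EqvGen (fun x y : Equiv.Perm (Fin n) => hopStep (word n x) (word n y)) a b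

/-- The index (1-based) of the `W_K`-orbit containing the letter `x ∈ [1,n]`:
orbits are consecutive intervals, numbered from the left. -/
def orbIdx (K : Finset ℕ) (x : ℕ) : ℕ :=
  1 + ((Finset.Icc 1 (x - 1)).filter fun t => t ∉ K).card

/-- The (0-based) descent set of a word `v` of length `n`. -/
def wdes (n : ℕ) (v : Fin n → ℕ) : Finset ℕ :=
  (Finset.range (n - 1)).filter fun i =>
    if h : i + 1 < n then v ⟨i + 1, h⟩ < v ⟨i, by omega⟩ else False

/-- The word `v` has content `μ(K)`: for each `i`, the number of letters of `v`
equal to `i` is the size of the `i`-th orbit of `W_K` on `[1,n]`. -/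
def HasContent (n : ℕ) (K : Finset ℕ) (v : Fin n → ℕ) : Prop :=
  ∀ i : ℕ, (Finset.univ.filter fun j => v j = i).card =
    ((Finset.Icc 1 n).filter fun x => orbIdx K x = i).card

/-- `w` is the standardization `φ(v)` of the word `v`: `w` orders positions by
letter value, breaking ties from left to right.  (This is exactly the map `φ`
of the paper: if `j` is the `k`-th smallest position with `v(j) = i`, then
`φ(v)(j) = k + μ₁ + ⋯ + μ_{i-1}`.) -/
def IsStd (n : ℕ) (v : Fin n → ℕ) (w : Equiv.Perm (Fin n)) : Prop :=
  ∀ j j' : Fin n, w j < w j' ↔ (v j < v j' ∨ (v j = v j' ∧ j < j'))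

/-!
Split a word at its largest letter `M`, `w = A M B`. Then `des w = des A + des B + [B ≠ ∅]`,
and `w` has neither a double nor an initial descent iff `A` and `B` have neither and `A` is
nonempty unless `B` is. Hence both sides of the identity, taken over the arrangements of an
arbitrary finite set of letters, obey the same recursion over the letter set `T` of `A`: on the
γ-side the word `M B` drops out and `A M` gains the factor `1 + t`, which accounts exactly for
the two Eulerian terms `M B` and `A M`.
-/

namespace EulerianGamma

section Words

variable {α : Type*} [LinearOrder α]

def desCount : List α → ℕ
  | a :: b :: t => (if b < a then 1 else 0) + desCount (b :: t)
  | _ => 0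

def NoInitialDes : List α → Prop
  | a :: b :: _ => a ≤ b
  | _ => True

def NoDoubleDes : List α → Prop
  | a :: b :: c :: t => (b < a → b ≤ c) ∧ NoDoubleDes (b :: c :: t)
  | _ => True

def IsGammaWord (l : List α) : Prop := NoInitialDes l ∧ NoDoubleDes l

lemma noDoubleDes_cons_cons {a b : α} {t : List α} :
    NoDoubleDes (a :: b :: t) ↔ (b < a → NoInitialDes (b :: t)) ∧ NoDoubleDes (b :: t) := by
  rcases t with _ | ⟨c, t⟩ <;> simp [NoDoubleDes, NoInitialDes]

lemma desCount_append_max {A B : List α} {M : α} (hA : ∀ x ∈ A, x < M)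
    (hB : ∀ x ∈ B, x < M) :
    desCount (A ++ M :: B) = desCount A + desCount B + if B = [] then 0 else 1 := by
  induction A with
  | nil =>
    rcases B with _ | ⟨b, t⟩
    · simp [desCount]
    · simp [desCount, hB b (by simp)]
      omega
  | cons a A ih =>
    have ha : ¬ M < a := (hA a (by simp)).not_gt
    rw [List.cons_append]
    rcases A with _ | ⟨d, A⟩
    · simp [desCount, ha] at ih ⊢
      exact ih
    · simp only [List.cons_append, desCount] at ih ⊢
      rw [ih fun x hx => hA x (List.mem_cons_of_mem a hx)]
      omega

lemma noInitialDes_append_max {A B : List α} {M : α} (hA : ∀ x ∈ A, x < M)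
    (hB : ∀ x ∈ B, x < M) :
    NoInitialDes (A ++ M :: B) ↔ NoInitialDes A ∧ (A = [] → B = []) := by
  rcases A with _ | ⟨a, _ | ⟨d, t⟩⟩
  · rcases B with _ | ⟨b, t⟩
    · simp [NoInitialDes]
    · simp [NoInitialDes, hB b (by simp)]
  · simp [NoInitialDes, (hA a (by simp)).le]
  · simp [NoInitialDes]

lemma noDoubleDes_append_max {A B : List α} {M : α} (hA : ∀ x ∈ A, x < M)
    (hB : ∀ x ∈ B, x < M) :
    NoDoubleDes (A ++ M :: B) ↔ NoDoubleDes A ∧ IsGammaWord B := by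
  induction A with
  | nil =>
    rcases B with _ | ⟨b, t⟩
    · simp [NoDoubleDes, IsGammaWord, NoInitialDes]
    · simp [noDoubleDes_cons_cons, IsGammaWord, NoDoubleDes, hB b (by simp)]
  | cons a A ih =>
    have hA' : ∀ x ∈ A, x < M := fun x hx => hA x (List.mem_cons_of_mem a hx)
    rcases A with _ | ⟨d, A⟩
    · simpa [noDoubleDes_cons_cons, (hA a (by simp)).not_gt, NoDoubleDes] using ih hA'
    · rw [List.cons_append, List.cons_append, noDoubleDes_cons_cons, ← List.cons_append,
        ih hA', noInitialDes_append_max hA' hB, noDoubleDes_cons_cons]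
      simp only [reduceCtorEq, IsEmpty.forall_iff, and_true]
      tauto

lemma isGammaWord_append_max {A B : List α} {M : α} (hA : ∀ x ∈ A, x < M)
    (hB : ∀ x ∈ B, x < M) :
    IsGammaWord (A ++ M :: B) ↔ IsGammaWord A ∧ IsGammaWord B ∧ (A = [] → B = []) := by
  simp only [IsGammaWord, noInitialDes_append_max hA hB, noDoubleDes_append_max hA hB]
  tauto

lemma two_mul_desCount_le_length : ∀ {l : List α}, NoDoubleDes l → 2 * desCount l ≤ l.length
  | [], _ | [_], _ => by simp [desCount]
  | [a, b], _ => by simp only [desCount]; split_ifs <;> simp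
  | a :: b :: c :: t, h => by
    rw [noDoubleDes_cons_cons] at h
    by_cases hba : b < a
    · have hbc : ¬ c < b := (h.1 hba).not_gt
      have := two_mul_desCount_le_length (noDoubleDes_cons_cons.mp h.2).2
      simp only [desCount, hba, hbc, if_true, if_false, List.length_cons] at this ⊢
      omega
    · have := two_mul_desCount_le_length h.2
      simp only [desCount, hba, if_false, List.length_cons] at this ⊢
      omega

lemma two_mul_desCount_lt_length {l : List α} (h : IsGammaWord l) (hl : l ≠ []) :
    2 * desCount l < l.length := by
  rcases l with _ | ⟨a, _ | ⟨b, t⟩⟩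
  · exact absurd rfl hl
  · simp [desCount]
  · have := two_mul_desCount_le_length (noDoubleDes_cons_cons.mp h.2).2
    simp only [desCount, (show a ≤ b from h.1).not_gt, if_false, List.length_cons] at this ⊢
    omega

end Words

section Weights

variable {α R : Type*} [LinearOrder α] [CommSemiring R]

-- For gamma words `2 * desCount l < l.length` (`two_mul_desCount_lt_length`), so the truncated
-- subtraction in the exponent is exact.
def gammaWeight (t : R) (l : List α) : R :=
  if IsGammaWord l then t ^ desCount l * (1 + t) ^ (l.length - 1 - 2 * desCount l) else 0

lemma gammaWeight_nil (t : R) : gammaWeight t ([] : List α) = 1 := by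
  simp [gammaWeight, IsGammaWord, NoInitialDes, NoDoubleDes, desCount]

lemma gammaWeight_append_max (t : R) {A B : List α} {M : α} (hA : ∀ x ∈ A, x < M)
    (hB : ∀ x ∈ B, x < M) (hAB : A ≠ [] ∨ B ≠ []) :
    gammaWeight t (A ++ M :: B) =
      (if A = [] then 0 else if B = [] then 1 + t else t) * gammaWeight t A * gammaWeight t B := by
  have hg := isGammaWord_append_max hA hB
  by_cases h : IsGammaWord A ∧ IsGammaWord B ∧ (A = [] → B = [])
  · obtain ⟨gA, gB, hAB'⟩ := h
    have hA0 : A ≠ [] := fun hA0 => hAB.elim (· hA0) (· (hAB' hA0))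
    have bA := two_mul_desCount_lt_length gA hA0
    rw [gammaWeight, if_pos (hg.2 ⟨gA, gB, hAB'⟩), gammaWeight, if_pos gA, gammaWeight,
      if_pos gB, if_neg hA0, desCount_append_max hA hB, List.length_append, List.length_cons]
    rcases eq_or_ne B [] with rfl | hB0
    · simp only [desCount, if_true, List.length_nil]
      rw [show A.length + (0 + 1) - 1 - 2 * (desCount A + 0 + 0)
          = (A.length - 1 - 2 * desCount A) + 1 by omega]
      ring
    · have bB := two_mul_desCount_lt_length gB hB0
      rw [if_neg hB0, if_neg hB0,
        show A.length + (B.length + 1) - 1 - 2 * (desCount A + desCount B + 1)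
          = (A.length - 1 - 2 * desCount A) + (B.length - 1 - 2 * desCount B) by omega]
      ring
  · rw [gammaWeight, if_neg (mt hg.1 h)]
    simp only [not_and_or] at h
    rcases h with h | h | h
    · simp [gammaWeight, h]
    · simp [gammaWeight, h]
    · simp [(Classical.not_imp.mp h).1]

lemma pow_desCount_append_max (t : R) {A B : List α} {M : α} (hA : ∀ x ∈ A, x < M)
    (hB : ∀ x ∈ B, x < M) :
    t ^ desCount (A ++ M :: B) = (if B = [] then 1 else t) * t ^ desCount A * t ^ desCount B := by
  rw [desCount_append_max hA hB]
  split_ifs <;> ring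

end Weights

section Arrangements

variable {β : Type*}

def permsOf (S : Finset β) : Finset (List β) := ⟨S.val.lists, Multiset.lists_nodup_finset S⟩

lemma mem_permsOf {S : Finset β} {l : List β} : l ∈ permsOf S ↔ S.val = l :=
  Multiset.mem_lists_iff _ _

lemma length_of_mem_permsOf {S : Finset β} {l : List β} (h : l ∈ permsOf S) :
    l.length = S.card := by
  rw [Finset.card, mem_permsOf.mp h, Multiset.coe_card]

lemma eq_nil_iff_of_mem_permsOf {S : Finset β} {l : List β} (h : l ∈ permsOf S) :
    l = [] ↔ S = ∅ := by
  rw [← List.length_eq_zero_iff, length_of_mem_permsOf h, Finset.card_eq_zero]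

lemma mem_of_mem_permsOf {S : Finset β} {l : List β} (h : l ∈ permsOf S) {x : β}
    (hx : x ∈ l) : x ∈ S := by
  rw [← Finset.mem_val, mem_permsOf.mp h]
  exact Multiset.mem_coe.mpr hx

lemma permsOf_empty : permsOf (∅ : Finset β) = {[]} := by
  ext l
  rw [mem_permsOf, Finset.mem_singleton, Finset.empty_val, eq_comm, Multiset.coe_eq_zero]

lemma permsOf_singleton (a : β) : permsOf {a} = {[a]} := by
  ext l
  rw [mem_permsOf, Finset.mem_singleton, Finset.singleton_val, eq_comm, Multiset.coe_eq_singleton]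

variable [DecidableEq β]

lemma sum_permsOf_insert {R : Type*} [AddCommMonoid R] {M : β} {s : Finset β} (hM : M ∉ s)
    (φ : List β → R) :
    ∑ l ∈ permsOf (insert M s), φ l =
      ∑ T ∈ s.powerset, ∑ A ∈ permsOf T, ∑ B ∈ permsOf (s \ T), φ (A ++ M :: B) := by
  simp_rw [← Finset.sum_product', Finset.sum_sigma']
  refine (Finset.sum_bij (fun p _ => p.2.1 ++ M :: p.2.2) ?_ ?_ ?_ fun _ _ => rfl).symm
  · rintro ⟨T, A, B⟩ hp
    simp only [Finset.mem_sigma, Finset.mem_powerset, Finset.mem_product, mem_permsOf] at hp ⊢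
    obtain ⟨hT, hA, hB⟩ := hp
    rw [Finset.insert_val_of_notMem hM, ← Multiset.coe_add, ← Multiset.cons_coe, ← hA, ← hB,
      Finset.sdiff_val, Multiset.add_cons, add_tsub_cancel_of_le (Finset.val_le_iff.mpr hT)]
  · rintro ⟨T, A, B⟩ hp ⟨T', A', B'⟩ hp' h
    simp only [Finset.mem_sigma, Finset.mem_powerset, Finset.mem_product, mem_permsOf] at hp hp'
    have hMA : ∀ {T : Finset β} {A : List β}, T ⊆ s → T.val = ↑A → M ∉ A :=
      fun hT hA hMA => hM (hT (by rw [← Finset.mem_val, hA]; exact Multiset.mem_coe.mpr hMA))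
    have hMB : ∀ {T : Finset β} {B : List β}, (s \ T).val = ↑B → M ∉ B := fun hB hMB =>
      hM (Finset.mem_sdiff.mp (by rw [← Finset.mem_val, hB]; exact Multiset.mem_coe.mpr hMB)).1
    obtain ⟨rfl, -, rfl⟩ :=
      (List.append_cons_inj_of_notMem (hMA hp.1 hp.2.1) (hMB hp.2.2)).mp h
    obtain rfl : T = T' := Finset.val_inj.mp (hp.2.1.trans hp'.2.1.symm)
    rfl
  · intro l hl
    rw [mem_permsOf] at hl
    have hnodup : l.Nodup := Multiset.coe_nodup.mp (hl ▸ (insert M s).nodup)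
    rw [Finset.insert_val_of_notMem hM] at hl
    obtain ⟨A, B, rfl⟩ :=
      List.append_of_mem (Multiset.mem_coe.mp (hl ▸ Multiset.mem_cons_self M _))
    have hs : s.val = ↑A + ↑B := by
      rwa [← Multiset.coe_add, ← Multiset.cons_coe, Multiset.add_cons,
        Multiset.cons_inj_right] at hl
    let T : Finset β := ⟨A, Multiset.coe_nodup.mpr (List.nodup_append.mp hnodup).1⟩
    refine ⟨⟨T, A, B⟩, ?_, rfl⟩
    simp only [Finset.mem_sigma, Finset.mem_powerset, Finset.mem_product, mem_permsOf]
    refine ⟨Finset.val_le_iff.mp (hs ▸ Multiset.le_add_right _ _), rfl, ?_⟩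
    rw [Finset.sdiff_val, hs, add_tsub_cancel_left]

lemma sum_powerset_ite_eq {R : Type*} [CommSemiring R] {s : Finset β} (hs : s.Nonempty)
    (t : R) (f : Finset β → R) (hf : f ∅ = f s) :
    ∑ T ∈ s.powerset, (if T = s then 1 else t) * f T =
      ∑ T ∈ s.powerset, (if T = ∅ then 0 else if T = s then 1 + t else t) * f T := by
  have h₀ : ∅ ∈ s.powerset := Finset.empty_mem_powerset s
  have h₁ : s ∈ s.powerset.erase ∅ :=
    Finset.mem_erase.mpr ⟨hs.ne_empty, Finset.mem_powerset_self s⟩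
  have hrest : ∀ T ∈ (s.powerset.erase ∅).erase s, (if T = s then 1 else t) * f T =
      (if T = ∅ then 0 else if T = s then 1 + t else t) * f T := fun T hT => by
    rw [if_neg (Finset.ne_of_mem_erase hT), if_neg (Finset.ne_of_mem_erase hT),
      if_neg (Finset.ne_of_mem_erase (Finset.mem_of_mem_erase hT))]
  rw [← Finset.add_sum_erase _ _ h₀, ← Finset.add_sum_erase _ _ h₁,
    ← Finset.add_sum_erase _ _ h₀, ← Finset.add_sum_erase _ _ h₁,
    Finset.sum_congr rfl hrest]
  simp only [if_true, if_neg hs.ne_empty.symm, if_neg hs.ne_empty, hf]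
  ring

end Arrangements

section Sums

variable {α R : Type*} [LinearOrder α] [CommSemiring R]

def eulerianSum (t : R) (S : Finset α) : R := ∑ l ∈ permsOf S, t ^ desCount l

def gammaSum (t : R) (S : Finset α) : R := ∑ l ∈ permsOf S, gammaWeight t l

lemma eulerianSum_insert_max (t : R) {M : α} {s : Finset α} (hM : ∀ x ∈ s, x < M) :
    eulerianSum t (insert M s) =
      ∑ T ∈ s.powerset, (if T = s then 1 else t) * eulerianSum t T * eulerianSum t (s \ T) := by
  rw [eulerianSum, sum_permsOf_insert fun h => (hM M h).false]
  refine Finset.sum_congr rfl fun T hT => ?_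
  have hTs := Finset.mem_powerset.mp hT
  rw [eulerianSum, eulerianSum, mul_assoc, Finset.sum_mul_sum, Finset.mul_sum]
  refine Finset.sum_congr rfl fun A hA => ?_
  rw [Finset.mul_sum]
  refine Finset.sum_congr rfl fun B hB => ?_
  rw [pow_desCount_append_max t (fun x hx => hM x (hTs (mem_of_mem_permsOf hA hx)))
    (fun x hx => hM x (Finset.sdiff_subset (mem_of_mem_permsOf hB hx))),
    mul_assoc]
  simp only [eq_nil_iff_of_mem_permsOf hB, Finset.sdiff_eq_empty_iff_subset, hTs.ge_iff_eq]

lemma gammaSum_insert_max (t : R) {M : α} {s : Finset α} (hM : ∀ x ∈ s, x < M)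
    (hs : s.Nonempty) :
    gammaSum t (insert M s) =
      ∑ T ∈ s.powerset, (if T = ∅ then 0 else if T = s then 1 + t else t) *
        gammaSum t T * gammaSum t (s \ T) := by
  rw [gammaSum, sum_permsOf_insert fun h => (hM M h).false]
  refine Finset.sum_congr rfl fun T hT => ?_
  have hTs := Finset.mem_powerset.mp hT
  rw [gammaSum, gammaSum, mul_assoc, Finset.sum_mul_sum, Finset.mul_sum]
  refine Finset.sum_congr rfl fun A hA => ?_
  rw [Finset.mul_sum]
  refine Finset.sum_congr rfl fun B hB => ?_
  have hAB : A ≠ [] ∨ B ≠ [] := by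
    rw [Ne, Ne, eq_nil_iff_of_mem_permsOf hA, eq_nil_iff_of_mem_permsOf hB, ← not_and_or]
    rintro ⟨rfl, h⟩
    exact hs.ne_empty (by simpa using h)
  rw [gammaWeight_append_max t (fun x hx => hM x (hTs (mem_of_mem_permsOf hA hx)))
    (fun x hx => hM x (Finset.sdiff_subset (mem_of_mem_permsOf hB hx))) hAB, mul_assoc]
  simp only [eq_nil_iff_of_mem_permsOf hA, eq_nil_iff_of_mem_permsOf hB,
    Finset.sdiff_eq_empty_iff_subset, hTs.ge_iff_eq]

lemma eulerianSum_eq_gammaSum_insert_max (t : R) {M : α} {s : Finset α} (hM : ∀ x ∈ s, x < M)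
    (ih : ∀ T ⊆ s, eulerianSum t T = gammaSum t T) :
    eulerianSum t (insert M s) = gammaSum t (insert M s) := by
  rcases s.eq_empty_or_nonempty with rfl | hs
  · simp [eulerianSum, gammaSum, permsOf_singleton, desCount, gammaWeight, IsGammaWord,
      NoInitialDes, NoDoubleDes]
  have ih' : ∀ T ∈ s.powerset,
      eulerianSum t T * eulerianSum t (s \ T) = gammaSum t T * gammaSum t (s \ T) := fun T hT => by
    rw [ih T (Finset.mem_powerset.mp hT), ih (s \ T) Finset.sdiff_subset]
  rw [eulerianSum_insert_max t hM, gammaSum_insert_max t hM hs]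
  simp_rw [mul_assoc]
  rw [Finset.sum_congr rfl fun T hT => by rw [ih' T hT]]
  exact sum_powerset_ite_eq hs t _ (by rw [Finset.sdiff_empty, Finset.sdiff_self, mul_comm])

theorem eulerianSum_eq_gammaSum (t : R) (S : Finset α) : eulerianSum t S = gammaSum t S := by
  induction S using Finset.strongInduction with
  | H S ih =>
    rcases S.eq_empty_or_nonempty with rfl | hS
    · simp [eulerianSum, gammaSum, permsOf_empty, desCount, gammaWeight_nil]
    rw [← Finset.insert_erase (S.max'_mem hS)]
    exact eulerianSum_eq_gammaSum_insert_max t (fun x hx => S.lt_max'_of_mem_erase_max' hS hx)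
      fun T hT => ih T (Finset.ssubset_of_subset_of_ssubset hT
        (Finset.erase_ssubset (S.max'_mem hS)))

end Sums

section Permutations

def descentSet (l : List ℕ) : Finset ℕ :=
  (range (l.length - 1)).filter fun i => l.getD (i + 1) 0 < l.getD i 0

lemma succ_mem_descentSet_cons {a i : ℕ} {l : List ℕ} :
    i + 1 ∈ descentSet (a :: l) ↔ i ∈ descentSet l := by
  simp only [descentSet, mem_filter, mem_range, List.getD_cons_succ, List.length_cons]
  omega

lemma zero_mem_descentSet_cons_cons {a b : ℕ} {t : List ℕ} :
    0 ∈ descentSet (a :: b :: t) ↔ b < a := by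
  simp [descentSet]

lemma desCount_eq_card_descentSet : ∀ l : List ℕ, desCount l = #(descentSet l)
  | [] | [_] => by simp [desCount, descentSet]
  | a :: b :: t => by
    rw [desCount, desCount_eq_card_descentSet (b :: t), descentSet, descentSet, card_filter,
      card_filter]
    simp only [List.length_cons, add_tsub_cancel_right, sum_range_succ', List.getD_cons_succ,
      List.getD_cons_zero]
    omega

lemma noInitialDes_iff_zero_notMem_descentSet :
    ∀ l : List ℕ, NoInitialDes l ↔ 0 ∉ descentSet l
  | [] | [_] => by simp [NoInitialDes, descentSet]
  | a :: b :: t => by simp [NoInitialDes, zero_mem_descentSet_cons_cons]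

lemma noDoubleDes_iff_descentSet :
    ∀ l : List ℕ, NoDoubleDes l ↔ ∀ i ∈ descentSet l, i + 1 ∉ descentSet l
  | [] | [_] | [_, _] => by simp [NoDoubleDes, descentSet]
  | a :: b :: c :: t => by
    rw [noDoubleDes_cons_cons, noDoubleDes_iff_descentSet (b :: c :: t),
      noInitialDes_iff_zero_notMem_descentSet]
    constructor
    · rintro ⟨h0, h⟩ (_ | i) hi
      · rw [succ_mem_descentSet_cons]
        exact h0 (zero_mem_descentSet_cons_cons.mp hi)
      · rw [succ_mem_descentSet_cons] at hi ⊢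
        exact h i hi
    · intro h
      refine ⟨fun hba => ?_, fun i hi => ?_⟩
      · simpa only [succ_mem_descentSet_cons] using h 0 (zero_mem_descentSet_cons_cons.mpr hba)
      · simpa only [succ_mem_descentSet_cons] using h (i + 1) (succ_mem_descentSet_cons.mpr hi)

lemma desSet_eq_descentSet_word (n : ℕ) (w : Equiv.Perm (Fin n)) :
    DesSet n w = descentSet (word n w) := by
  have hol : ∀ i, ol n w i = (word n w).getD i 0 := fun i => by
    unfold ol word
    split_ifs with h <;> simp [List.getD_eq_getElem?_getD, h]
  simp only [DesSet, descentSet, hol, word, List.length_ofFn]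

lemma word_mem_permsOf_range (n : ℕ) (w : Equiv.Perm (Fin n)) :
    word n w ∈ permsOf (range n) := by
  have hnd : (word n w).Nodup := List.nodup_ofFn.mpr fun i j h => w.injective (Fin.ext h)
  rw [mem_permsOf, Multiset.Nodup.ext (range n).nodup (Multiset.coe_nodup.mpr hnd)]
  intro x
  simp only [Finset.mem_val, mem_range, Multiset.mem_coe, word, List.mem_ofFn]
  exact ⟨fun hx => ⟨w⁻¹ ⟨x, hx⟩, by simp⟩, fun ⟨i, hi⟩ => hi ▸ (w i).2⟩

lemma exists_word_eq {n : ℕ} {l : List ℕ} (hl : l ∈ permsOf (range n)) :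
    ∃ w : Equiv.Perm (Fin n), word n w = l := by
  have hnd : l.Nodup := by
    have := (range n).nodup
    rwa [mem_permsOf.mp hl, Multiset.coe_nodup] at this
  have hlen : l.length = n := by rw [length_of_mem_permsOf hl, card_range]
  let f : Fin n → Fin n := fun i =>
    ⟨l[(i : ℕ)]'(hlen ▸ i.2), mem_range.mp (mem_of_mem_permsOf hl (List.getElem_mem _))⟩
  have hf : f.Injective := fun _ _ h => Fin.ext (hnd.getElem_inj_iff.mp (congrArg Fin.val h))
  refine ⟨Equiv.ofBijective f hf.bijective_of_finite,
    List.ext_getElem (by simp [word, hlen]) ?_⟩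
  intro i _ _
  simp [word, f]

lemma sum_perm_word_eq_sum_permsOf_range {M : Type*} [AddCommMonoid M] (n : ℕ)
    (φ : List ℕ → M) :
    ∑ w : Equiv.Perm (Fin n), φ (word n w) = ∑ l ∈ permsOf (range n), φ l :=
  Finset.sum_bij (fun w _ => word n w) (fun w _ => word_mem_permsOf_range n w)
    (fun _ _ _ _ h => Equiv.ext fun i => Fin.ext (congrFun (List.ofFn_injective h) i))
    (fun _ hl => (exists_word_eq hl).imp fun w hw => ⟨mem_univ w, hw⟩) fun _ _ => rfl

end Permutations

end EulerianGamma

open EulerianGamma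

theorem eulerian_gamma_tilde (n : ℕ) :
    ∑ w : Equiv.Perm (Fin n), (X : Polynomial ℕ) ^ des n w =
      ∑ w ∈ Finset.univ.filter
          (fun w : Equiv.Perm (Fin n) => NoDoubleDescent n w ∧ NoInitialDescent n w),
        (X : Polynomial ℕ) ^ des n w * (1 + X) ^ (n - 1 - 2 * des n w) := by
  have hdes : ∀ w, des n w = desCount (word n w) := fun w => by
    rw [des, desSet_eq_descentSet_word, desCount_eq_card_descentSet]
  have hgamma : ∀ w, (NoDoubleDescent n w ∧ NoInitialDescent n w) ↔ IsGammaWord (word n w) :=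
    fun w => by
      rw [NoDoubleDescent, NoInitialDescent, IsGammaWord, noInitialDes_iff_zero_notMem_descentSet,
        noDoubleDes_iff_descentSet, desSet_eq_descentSet_word, and_comm]
  calc ∑ w : Equiv.Perm (Fin n), (X : Polynomial ℕ) ^ des n w
      = eulerianSum X (range n) := by
        simp only [hdes, eulerianSum,
          sum_perm_word_eq_sum_permsOf_range n fun l => (X : ℕ[X]) ^ desCount l]
    _ = gammaSum X (range n) := eulerianSum_eq_gammaSum X (range n)
    _ = _ := by
        rw [gammaSum, ← sum_perm_word_eq_sum_permsOf_range, sum_filter]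
        refine sum_congr rfl fun w _ => ?_
        simp only [gammaWeight, hgamma, hdes, word, List.length_ofFn]
end
end

section
/- The Eulerian polynomial A_n(t) = Σ_{w ∈ S_n} t^{des(w)} equals Σ_{w ∈ Ŝ_n} t^{des(w)} (1+t)^{n-1-2·des(w)}, where Ŝ_n is the set of permutations in S_n with no double descent and no final descent. -/
open Finset Polynomial

open scoped Classical

noncomputable section

/-!
Split an arrangement of a finite set of letters at its smallest letter `m`, as `A ++ m :: B`.
Its descents are those of `A`, those of `B`, and one more at the end of `A` when `A ≠ []`;
and it has no double or final descent iff `A` and `B` have none and `B ≠ []` whenever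
`A ≠ []`. Hence both sides of the identity, as functions of the set `s` of letters other
than `m`, satisfy `F (insert m s) = (1 + t) F s + t ∑_{∅ ≠ U ⊊ s} F U F (s \ U)`.
On the Eulerian side the factor `1 + t` collects `U = ∅` and `U = s`; on the gamma side
`U = s` contributes nothing (a final descent), and `U = ∅` alone gives `(1 + t) F s`,
since prepending `m` lengthens the word without adding a descent. Both sides are `1` on
sets with at most one element.
-/

section Descents

variable {α : Type*} [LinearOrder α] {A B l : List α} {m : α} {i : ℕ}

def List.descents (l : List α) : Finset ℕ :=
  {i ∈ Finset.range (l.length - 1) | ∃ h : i + 1 < l.length, l[i + 1] < l[i]}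

theorem List.mem_descents : i ∈ l.descents ↔ ∃ h : i + 1 < l.length, l[i + 1] < l[i] := by
  simp only [descents, Finset.mem_filter, Finset.mem_range]
  exact ⟨And.right, fun h => ⟨by obtain ⟨h, -⟩ := h; omega, h⟩⟩

theorem List.lt_length_of_mem_descents (h : i ∈ l.descents) : i + 1 < l.length :=
  (mem_descents.1 h).1

@[simp] theorem List.descents_nil : ([] : List α).descents = ∅ := by
  simp [descents]

@[simp] theorem List.descents_singleton (a : α) : [a].descents = ∅ := by
  simp [descents]

theorem List.mem_descents_append_of_lt {C : List α} (hi : i + 1 < A.length) :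
    i ∈ (A ++ C).descents ↔ i ∈ A.descents := by
  rw [mem_descents, mem_descents]
  simp only [getElem_append_left hi, getElem_append_left (show i < A.length by omega)]
  exact ⟨fun ⟨_, h⟩ => ⟨hi, h⟩, fun ⟨_, h⟩ => ⟨by simp; omega, h⟩⟩

theorem List.add_mem_descents_append_cons {j : ℕ} :
    A.length + 1 + j ∈ (A ++ m :: B).descents ↔ j ∈ B.descents := by
  rw [mem_descents, mem_descents]
  simp only [getElem_append_right (show A.length ≤ A.length + 1 + j by omega),
    getElem_append_right (show A.length ≤ A.length + 1 + j + 1 by omega),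
    show A.length + 1 + j - A.length = j + 1 by omega,
    show A.length + 1 + j + 1 - A.length = j + 1 + 1 by omega, getElem_cons_succ]
  exact ⟨fun ⟨h, hd⟩ => ⟨by simp at h; omega, hd⟩,
    fun ⟨h, hd⟩ => ⟨by simp; omega, hd⟩⟩

theorem List.mem_descents_append_cons (hA : ∀ x ∈ A, m < x) (hB : ∀ x ∈ B, m < x) :
    i ∈ (A ++ m :: B).descents ↔
      i ∈ A.descents ∨ (A ≠ [] ∧ i + 1 = A.length) ∨
        ∃ j ∈ B.descents, i = A.length + 1 + j := by
  rcases (by omega : i + 1 < A.length ∨ i + 1 = A.length ∨ i = A.length ∨ A.length + 1 ≤ i)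
    with hi | hi | rfl | hi
  · rw [mem_descents_append_of_lt hi]
    refine ⟨Or.inl, ?_⟩
    rintro (h | ⟨-, h⟩ | ⟨j, -, rfl⟩) <;> first | exact h | omega
  · rw [mem_descents]
    refine iff_of_true ⟨by simp; omega, ?_⟩
      (Or.inr (Or.inl ⟨ne_nil_of_length_pos (by omega), hi⟩))
    simp only [getElem_append_left (show i < A.length by omega), hi,
      getElem_append_right (le_refl A.length), Nat.sub_self, getElem_cons_zero]
    exact hA _ (getElem_mem _)
  · refine iff_of_false (fun h => ?_) ?_
    · obtain ⟨_, hd⟩ := mem_descents.1 h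
      simp only [getElem_append_right (show A.length ≤ A.length + 1 by omega),
        getElem_append_right (le_refl A.length), Nat.sub_self, getElem_cons_zero,
        Nat.add_sub_cancel_left, getElem_cons_succ] at hd
      exact (hB _ (getElem_mem _)).not_gt hd
    · rintro (h | ⟨-, h⟩ | ⟨j, -, h⟩)
      · have := lt_length_of_mem_descents h
        omega
      all_goals omega
  · obtain ⟨j, rfl⟩ := Nat.exists_eq_add_of_le hi
    rw [add_mem_descents_append_cons]
    refine ⟨fun h => Or.inr (Or.inr ⟨j, h, rfl⟩), ?_⟩
    rintro (h | ⟨-, h⟩ | ⟨j', h, hj'⟩)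
    · have := lt_length_of_mem_descents h
      omega
    · omega
    · rwa [show j = j' by omega]

theorem List.card_descents_append_cons (hA : ∀ x ∈ A, m < x) (hB : ∀ x ∈ B, m < x) :
    #(A ++ m :: B).descents = #A.descents + (if A = [] then 0 else 1) + #B.descents := by
  set J : Finset ℕ := if A = [] then ∅ else {A.length - 1}
  have hsplit : (A ++ m :: B).descents =
      (A.descents ∪ J) ∪ B.descents.map (addLeftEmbedding (A.length + 1)) := by
    ext i
    rw [mem_descents_append_cons hA hB]
    by_cases h : A = []
    · simp [J, h, eq_comm (a := i)]
    · have : A.length - 1 = i ↔ i + 1 = A.length := by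
        have := length_pos_iff.2 h
        omega
      simp [J, h, eq_comm (a := i), this]
      tauto
  have hAJ : _root_.Disjoint A.descents J := by
    by_cases h : A = []
    · simp [J, h]
    · simp only [J, if_neg h, Finset.disjoint_singleton_right]
      intro h
      have := lt_length_of_mem_descents h
      omega
  have hJB : _root_.Disjoint (A.descents ∪ J)
      (B.descents.map (addLeftEmbedding (A.length + 1))) := by
    rw [Finset.disjoint_left]
    intro i hi hi'
    obtain ⟨j, -, rfl⟩ := Finset.mem_map.1 hi'
    rcases Finset.mem_union.1 hi with h | h
    · have := lt_length_of_mem_descents h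
      simp at this
      omega
    · by_cases hA0 : A = [] <;> simp [J, hA0] at h
      omega
  rw [hsplit, Finset.card_union_of_disjoint hJB, Finset.card_union_of_disjoint hAJ,
    Finset.card_map]
  split_ifs <;> simp [J, *]

def List.NoDoubleOrFinalDescent (l : List α) : Prop :=
  ∀ i ∈ l.descents, i + 1 ∉ l.descents ∧ i + 2 < l.length

theorem List.noDoubleOrFinalDescent_iff :
    l.NoDoubleOrFinalDescent ↔
      (∀ i ∈ l.descents, i + 1 ∉ l.descents) ∧ l.length - 2 ∉ l.descents := by
  constructor
  · intro h
    refine ⟨fun i hi => (h i hi).1, fun hl => ?_⟩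
    have := (h _ hl).2
    have := lt_length_of_mem_descents hl
    omega
  · rintro ⟨h, hl⟩ i hi
    refine ⟨h i hi, ?_⟩
    have := lt_length_of_mem_descents hi
    by_contra h'
    exact hl (by rwa [show l.length - 2 = i by omega])

@[simp] theorem List.noDoubleOrFinalDescent_nil : ([] : List α).NoDoubleOrFinalDescent := by
  simp [NoDoubleOrFinalDescent]

@[simp] theorem List.noDoubleOrFinalDescent_singleton (a : α) : [a].NoDoubleOrFinalDescent := by
  simp [NoDoubleOrFinalDescent]

theorem List.noDoubleOrFinalDescent_append_cons (hA : ∀ x ∈ A, m < x)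
    (hB : ∀ x ∈ B, m < x) :
    (A ++ m :: B).NoDoubleOrFinalDescent ↔
      A.NoDoubleOrFinalDescent ∧ (A ≠ [] → B ≠ []) ∧ B.NoDoubleOrFinalDescent := by
  simp only [NoDoubleOrFinalDescent, mem_descents_append_cons hA hB, length_append, length_cons]
  constructor
  · intro h
    refine ⟨fun i hi => ?_, fun hA0 => ?_, fun j hj => ?_⟩
    · have := lt_length_of_mem_descents hi
      have hi := h i (Or.inl hi)
      refine ⟨fun h' => hi.1 (Or.inl h'), ?_⟩
      by_contra h'
      exact hi.1 (Or.inr (Or.inl ⟨ne_nil_of_length_pos (by omega), by omega⟩))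
    · have := length_pos_iff.2 hA0
      have := (h (A.length - 1) (Or.inr (Or.inl ⟨hA0, by omega⟩))).2
      exact ne_nil_of_length_pos (by omega)
    · have hj := h _ (Or.inr (Or.inr ⟨j, hj, rfl⟩))
      exact ⟨fun h' => hj.1 (Or.inr (Or.inr ⟨j + 1, h', by omega⟩)), by omega⟩
  · rintro ⟨hPA, hAB, hPB⟩ i (hi | ⟨hA0, hi⟩ | ⟨j, hj, rfl⟩)
    · have := hPA i hi
      refine ⟨?_, by omega⟩
      rintro (h | ⟨-, h⟩ | ⟨j, -, h⟩)
      · exact this.1 h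
      · omega
      · omega
    · have := length_pos_iff.2 (hAB hA0)
      refine ⟨?_, by omega⟩
      rintro (h | ⟨-, h⟩ | ⟨j, -, h⟩)
      · have := lt_length_of_mem_descents h
        omega
      · omega
      · omega
    · have := hPB j hj
      refine ⟨?_, by omega⟩
      rintro (h | ⟨-, h⟩ | ⟨j', hj', h⟩)
      · have := lt_length_of_mem_descents h
        omega
      · omega
      · exact this.1 (by rwa [show j + 1 = j' by omega])

theorem List.two_mul_card_descents_le (hl : l.NoDoubleOrFinalDescent) :
    2 * #l.descents ≤ l.length - 1 := by
  have hdisj : _root_.Disjoint l.descents (l.descents.map (addRightEmbedding 1)) := by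
    rw [Finset.disjoint_left]
    intro i hi hi'
    obtain ⟨j, hj, rfl⟩ := Finset.mem_map.1 hi'
    exact (hl j hj).1 hi
  have hsub :
      l.descents ∪ l.descents.map (addRightEmbedding 1) ⊆ Finset.range (l.length - 1) := by
    intro i hi
    rw [Finset.mem_union, Finset.mem_map] at hi
    rw [Finset.mem_range]
    rcases hi with hi | ⟨j, hj, rfl⟩
    · have := lt_length_of_mem_descents hi
      omega
    · have := (hl j hj).2
      simp only [addRightEmbedding_apply]
      omega
  have := Finset.card_le_card hsub
  rw [Finset.card_union_of_disjoint hdisj, Finset.card_map, Finset.card_range] at this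
  omega

end Descents

namespace Finset

variable {α : Type*} {s u v : Finset α} {l : List α}

def arrangements (s : Finset α) : Finset (List α) :=
  ⟨s.val.lists, Multiset.lists_nodup_finset s⟩

theorem mem_arrangements : l ∈ s.arrangements ↔ s.val = l := by
  simp [arrangements, ← mem_val]

theorem nodup_of_mem_arrangements (hl : l ∈ s.arrangements) : l.Nodup :=
  Multiset.coe_nodup.1 (mem_arrangements.1 hl ▸ s.nodup)

theorem mem_of_mem_arrangements (hl : l ∈ s.arrangements) {x : α} (hx : x ∈ l) : x ∈ s := by
  rw [← mem_val, mem_arrangements.1 hl]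
  exact hx

theorem lt_of_mem_arrangements [LT α] {m : α} (hv : ∀ x ∈ v, m < x) (hu : u ⊆ v)
    (hl : l ∈ u.arrangements) : ∀ x ∈ l, m < x :=
  fun x hx => hv x (hu (mem_of_mem_arrangements hl hx))

theorem eq_nil_iff_of_mem_arrangements (hl : l ∈ s.arrangements) : l = [] ↔ s = ∅ := by
  rw [← List.length_eq_zero_iff, ← Multiset.coe_card, ← mem_arrangements.1 hl, card_val,
    card_eq_zero]

@[simp] theorem arrangements_empty : (∅ : Finset α).arrangements = {[]} := by
  ext l
  simp [mem_arrangements, eq_comm]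

@[simp] theorem arrangements_singleton (a : α) : ({a} : Finset α).arrangements = {[a]} := by
  ext l
  simp [mem_arrangements, eq_comm]

theorem card_arrangements (s : Finset α) : #s.arrangements = (#s).factorial := by
  change Multiset.card s.val.lists = _
  rw [← coe_toList s, Multiset.lists_coe, Multiset.coe_card, List.length_permutations,
    length_toList]

theorem sum_arrangements_insert [DecidableEq α] {M : Type*} [AddCommMonoid M] {m : α}
    (hm : m ∉ s) (f : List α → M) :
    ∑ l ∈ (insert m s).arrangements, f l =
      ∑ u ∈ s.powerset, ∑ A ∈ u.arrangements, ∑ B ∈ (s \ u).arrangements,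
        f (A ++ m :: B) := by
  have hcoe (A B : List α) : ((A ++ m :: B : List α) : Multiset α) = m ::ₘ (↑A + ↑B) := by
    rw [← Multiset.coe_add, ← Multiset.cons_coe, Multiset.add_cons]
  simp_rw [← sum_product', sum_sigma']
  symm
  refine sum_bij (fun x _ => x.2.1 ++ m :: x.2.2) ?_ ?_ ?_ fun _ _ => rfl
  · rintro ⟨u, A, B⟩ hx
    simp only [mem_sigma, mem_powerset, mem_product, mem_arrangements] at hx ⊢
    obtain ⟨hu, hA, hB⟩ := hx
    rw [insert_val_of_notMem hm, hcoe, ← hA, ← hB, sdiff_val,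
      add_tsub_cancel_of_le (val_le_iff.2 hu)]
  · rintro ⟨u, A, B⟩ hx ⟨u', A', B'⟩ hx' h
    simp only [mem_sigma, mem_powerset, mem_product] at hx hx' h
    obtain ⟨hu, hA, hB⟩ := hx
    have hmA : m ∉ A := fun h => hm (hu (mem_of_mem_arrangements hA h))
    have hmB : m ∉ B := fun h => hm (sdiff_subset (mem_of_mem_arrangements hB h))
    obtain ⟨rfl, -, rfl⟩ := (List.append_cons_inj_of_notMem hmA hmB).1 h
    obtain rfl : u = u' :=
      val_inj.1 ((mem_arrangements.1 hA).trans (mem_arrangements.1 hx'.2.1).symm)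
    rfl
  · intro l hl
    have hml : m ∈ (insert m s).val := mem_insert_self m s
    obtain ⟨A, B, rfl⟩ :=
      List.mem_iff_append.1 (Multiset.mem_coe.1 (mem_arrangements.1 hl ▸ hml))
    have hs : s.val = ↑A + ↑B := by
      rw [← Multiset.cons_inj_right m, ← insert_val_of_notMem hm, mem_arrangements.1 hl, hcoe]
    have hA : A.toFinset.val = ↑A := by
      rw [List.toFinset_val,
        ((nodup_of_mem_arrangements hl).sublist (List.sublist_append_left _ _)).dedup]
    refine ⟨⟨A.toFinset, A, B⟩, ?_, rfl⟩
    simp only [mem_sigma, mem_powerset, mem_product, mem_arrangements]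
    refine ⟨val_le_iff.1 (by rw [hA, hs]; exact Multiset.le_add_right _ _), hA, ?_⟩
    rw [sdiff_val, hs, hA, add_tsub_cancel_left]

theorem sum_powerset_eq_add_add_sum [DecidableEq α] {M : Type*} [AddCommMonoid M]
    (hs : s.Nonempty) (f : Finset α → M) :
    ∑ u ∈ s.powerset, f u = f ∅ + f s + ∑ u ∈ (s.powerset.erase ∅).erase s, f u := by
  rw [← add_sum_erase _ f (empty_mem_powerset s), add_assoc,
    ← add_sum_erase _ f (mem_erase.2 ⟨hs.ne_empty, mem_powerset_self s⟩)]

end Finset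

section Gamma

variable {α : Type*} [LinearOrder α] {R : Type*} [CommSemiring R] (t : R)

def gammaWeight (l : List α) : R :=
  if l.NoDoubleOrFinalDescent then
    t ^ #l.descents * (1 + t) ^ (l.length - 1 - 2 * #l.descents)
  else 0

variable {t} {A B : List α} {m : α}

theorem gammaWeight_cons (hB : ∀ x ∈ B, m < x) (hBne : B ≠ []) :
    gammaWeight t (m :: B) = (1 + t) * gammaWeight t B := by
  have hP := List.noDoubleOrFinalDescent_append_cons (A := []) (by simp) hB
  have hd := List.card_descents_append_cons (A := []) (by simp) hB
  simp only [List.nil_append, List.noDoubleOrFinalDescent_nil, ne_eq, not_true_eq_false,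
    false_implies, true_and, if_pos, List.descents_nil, card_empty, zero_add, add_zero] at hP hd
  simp only [gammaWeight, hP, hd, List.length_cons]
  split_ifs with hPB
  · have := List.two_mul_card_descents_le hPB
    have := List.length_pos_iff.2 hBne
    rw [show B.length + 1 - 1 - 2 * #B.descents = (B.length - 1 - 2 * #B.descents) + 1 by omega,
      pow_succ]
    ring
  · rw [mul_zero]

theorem gammaWeight_append_singleton (hA : ∀ x ∈ A, m < x) (hAne : A ≠ []) :
    gammaWeight t (A ++ [m]) = 0 := by
  have hP := List.noDoubleOrFinalDescent_append_cons (B := []) hA (by simp)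
  rw [gammaWeight, if_neg fun h => (hP.1 h).2.1 hAne rfl]

theorem gammaWeight_append_cons (hA : ∀ x ∈ A, m < x) (hB : ∀ x ∈ B, m < x)
    (hAne : A ≠ []) (hBne : B ≠ []) :
    gammaWeight t (A ++ m :: B) = t * gammaWeight t A * gammaWeight t B := by
  simp only [gammaWeight, List.noDoubleOrFinalDescent_append_cons hA hB,
    List.card_descents_append_cons hA hB, if_neg hAne, List.length_append, List.length_cons]
  by_cases hPA : A.NoDoubleOrFinalDescent
  · by_cases hPB : B.NoDoubleOrFinalDescent
    · rw [if_pos ⟨hPA, fun _ => hBne, hPB⟩, if_pos hPA, if_pos hPB]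
      have := List.two_mul_card_descents_le hPA
      have := List.two_mul_card_descents_le hPB
      have := List.length_pos_iff.2 hAne
      have := List.length_pos_iff.2 hBne
      rw [show A.length + (B.length + 1) - 1 - 2 * (#A.descents + 1 + #B.descents) =
        (A.length - 1 - 2 * #A.descents) + (B.length - 1 - 2 * #B.descents) by omega]
      ring
    · simp [hPB]
  · simp [hPA]

end Gamma

section Recursion

variable {α : Type*} [LinearOrder α] {R : Type*} [CommSemiring R] (t : R)

def eulerSum (s : Finset α) : R := ∑ l ∈ s.arrangements, t ^ #l.descents

def gammaSum (s : Finset α) : R := ∑ l ∈ s.arrangements, gammaWeight t l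

variable {t} {s : Finset α} {m : α}

@[simp] theorem eulerSum_empty : eulerSum t (∅ : Finset α) = 1 := by
  simp [eulerSum]

@[simp] theorem gammaSum_empty : gammaSum t (∅ : Finset α) = 1 := by
  simp [gammaSum, gammaWeight]

theorem eulerSum_insert (hmin : ∀ x ∈ s, m < x) (hs : s.Nonempty) :
    eulerSum t (insert m s) = (1 + t) * eulerSum t s +
      t * ∑ u ∈ (s.powerset.erase ∅).erase s, eulerSum t u * eulerSum t (s \ u) := by
  have hterm : ∀ u ∈ s.powerset, ∑ A ∈ u.arrangements, ∑ B ∈ (s \ u).arrangements,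
      t ^ #(A ++ m :: B).descents =
        (if u = ∅ then 1 else t) * (eulerSum t u * eulerSum t (s \ u)) := by
    intro u hu
    rw [eulerSum, eulerSum, sum_mul_sum, mul_sum]
    refine sum_congr rfl fun A hA => ?_
    rw [mul_sum]
    refine sum_congr rfl fun B hB => ?_
    rw [List.card_descents_append_cons (lt_of_mem_arrangements hmin (mem_powerset.1 hu) hA)
      (lt_of_mem_arrangements hmin sdiff_subset hB)]
    simp only [eq_nil_iff_of_mem_arrangements hA]
    split_ifs <;> ring
  rw [eulerSum, sum_arrangements_insert (fun h => (hmin m h).false), sum_congr rfl hterm,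
    sum_powerset_eq_add_add_sum hs, if_pos rfl, if_neg hs.ne_empty, Finset.sdiff_empty,
    Finset.sdiff_self, eulerSum_empty, mul_sum,
    sum_congr rfl fun u hu => by rw [if_neg (ne_of_mem_erase (mem_of_mem_erase hu))]]
  ring

theorem gammaSum_insert (hmin : ∀ x ∈ s, m < x) (hs : s.Nonempty) :
    gammaSum t (insert m s) = (1 + t) * gammaSum t s +
      t * ∑ u ∈ (s.powerset.erase ∅).erase s, gammaSum t u * gammaSum t (s \ u) := by
  have hempty : ∑ A ∈ (∅ : Finset α).arrangements, ∑ B ∈ (s \ ∅).arrangements,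
      gammaWeight t (A ++ m :: B) = (1 + t) * gammaSum t s := by
    simp only [arrangements_empty, sum_singleton, Finset.sdiff_empty, List.nil_append, gammaSum,
      mul_sum]
    exact sum_congr rfl fun B hB => gammaWeight_cons (lt_of_mem_arrangements hmin subset_rfl hB)
      ((eq_nil_iff_of_mem_arrangements hB).not.2 hs.ne_empty)
  have hfull : ∑ A ∈ s.arrangements, ∑ B ∈ (s \ s).arrangements,
      gammaWeight t (A ++ m :: B) = 0 := by
    simp only [Finset.sdiff_self, arrangements_empty, sum_singleton]
    exact sum_eq_zero fun A hA => gammaWeight_append_singleton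
      (lt_of_mem_arrangements hmin subset_rfl hA)
      ((eq_nil_iff_of_mem_arrangements hA).not.2 hs.ne_empty)
  have hrest : ∀ u ∈ (s.powerset.erase ∅).erase s, ∑ A ∈ u.arrangements,
      ∑ B ∈ (s \ u).arrangements, gammaWeight t (A ++ m :: B) =
        t * (gammaSum t u * gammaSum t (s \ u)) := by
    intro u hu
    simp only [mem_erase, mem_powerset] at hu
    obtain ⟨hus, hu0, hu⟩ := hu
    have hsu : s \ u ≠ ∅ := fun h => hus (subset_antisymm hu (sdiff_eq_empty_iff_subset.1 h))
    rw [gammaSum, gammaSum, sum_mul_sum, mul_sum]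
    refine sum_congr rfl fun A hA => ?_
    rw [mul_sum]
    refine sum_congr rfl fun B hB => ?_
    rw [gammaWeight_append_cons (lt_of_mem_arrangements hmin hu hA)
      (lt_of_mem_arrangements hmin sdiff_subset hB) ((eq_nil_iff_of_mem_arrangements hA).not.2 hu0)
      ((eq_nil_iff_of_mem_arrangements hB).not.2 hsu)]
    ring
  rw [gammaSum, sum_arrangements_insert (fun h => (hmin m h).false),
    sum_powerset_eq_add_add_sum hs, hempty, hfull, sum_congr rfl hrest, mul_sum, add_zero]

theorem eulerSum_eq_gammaSum (s : Finset α) : eulerSum t s = gammaSum t s := by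
  induction s using Finset.strongInduction with
  | H s ih =>
  rcases s.eq_empty_or_nonempty with rfl | hs
  · rw [eulerSum_empty, gammaSum_empty]
  set m := s.min' hs
  have hm : m ∈ s := s.min'_mem hs
  have hmin : ∀ x ∈ s.erase m, m < x := fun x hx => s.min'_lt_of_mem_erase_min' hs hx
  have hsub : s.erase m ⊂ s := erase_ssubset hm
  rw [← insert_erase hm]
  rcases (s.erase m).eq_empty_or_nonempty with hs' | hs'
  · simp [hs', eulerSum, gammaSum, gammaWeight]
  rw [eulerSum_insert hmin hs', gammaSum_insert hmin hs', ih _ hsub]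
  congr 2
  refine sum_congr rfl fun u hu => ?_
  have hu : u ⊆ s.erase m := mem_powerset.1 (mem_of_mem_erase (mem_of_mem_erase hu))
  rw [ih _ (hu.trans_ssubset hsub), ih _ (sdiff_subset.trans_ssubset hsub)]

end Recursion

section Permutations

variable {n : ℕ}

theorem List.descents_ofFn_eq_desSet (w : Equiv.Perm (Fin n)) :
    (List.ofFn w).descents = DesSet n w := by
  ext i
  simp only [mem_descents, length_ofFn, List.getElem_ofFn, DesSet, Finset.mem_filter,
    Finset.mem_range]
  simp only [ol]
  constructor
  · rintro ⟨h, hd⟩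
    rw [dif_pos h, dif_pos (by omega : i < n)]
    exact ⟨by omega, hd⟩
  · rintro ⟨h, hd⟩
    rw [dif_pos (by omega : i + 1 < n), dif_pos (by omega : i < n)] at hd
    exact ⟨by omega, hd⟩

theorem sum_perm_ofFn {M : Type*} [AddCommMonoid M] (f : List (Fin n) → M) :
    ∑ w : Equiv.Perm (Fin n), f (List.ofFn w) =
      ∑ l ∈ (univ : Finset (Fin n)).arrangements, f l := by
  have hinj : Function.Injective fun w : Equiv.Perm (Fin n) => List.ofFn w :=
    fun w w' h => Equiv.ext (congrFun (List.ofFn_injective h))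
  have himage : univ.image (fun w : Equiv.Perm (Fin n) => List.ofFn w) = univ.arrangements := by
    refine eq_of_subset_of_card_le (fun l hl => ?_) ?_
    · obtain ⟨w, -, rfl⟩ := mem_image.1 hl
      rw [mem_arrangements, Multiset.Nodup.ext univ.nodup
        (Multiset.coe_nodup.2 (List.nodup_ofFn.2 w.injective))]
      simp [w.surjective _]
    · simp [card_arrangements, card_image_of_injective _ hinj, Fintype.card_perm]
  rw [← himage, sum_image hinj.injOn]

end Permutations

theorem eulerian_gamma_hat (n : ℕ) :
    ∑ w : Equiv.Perm (Fin n), (X : Polynomial ℕ) ^ des n w =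
      ∑ w ∈ Finset.univ.filter
          (fun w : Equiv.Perm (Fin n) => NoDoubleDescent n w ∧ NoFinalDescent n w),
        (X : Polynomial ℕ) ^ des n w * (1 + X) ^ (n - 1 - 2 * des n w) := by
  calc ∑ w : Equiv.Perm (Fin n), (X : Polynomial ℕ) ^ des n w
      = eulerSum X (univ : Finset (Fin n)) := by
        simp only [eulerSum, ← sum_perm_ofFn, List.descents_ofFn_eq_desSet, des]
    _ = gammaSum X (univ : Finset (Fin n)) := eulerSum_eq_gammaSum _
    _ = _ := by
        simp only [gammaSum, ← sum_perm_ofFn, sum_filter, gammaWeight,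
          List.noDoubleOrFinalDescent_iff, List.descents_ofFn_eq_desSet, List.length_ofFn]
        exact sum_congr rfl fun w _ => if_congr Iff.rfl rfl rfl
end
end

section
/- For n ≥ 1 and 0 ≤ j ≤ ⌊(n-1)/2⌋, the number of permutations in S_n with no double descent, no final descent, and exactly j descents equals the number of permutations in S_n with no double descent, no initial descent, and exactly j descents. -/
open Finset Polynomial

open scoped Classical

noncomputable section

lemma ol_lt (n : ℕ) (hn : 0 < n) (w : Equiv.Perm (Fin n)) (i : ℕ) : ol n w i < n := by
  unfold ol; split
  · exact (w _).isLt
  · exact hn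

lemma ol_star (n : ℕ) (w : Equiv.Perm (Fin n)) (i : ℕ) (h : i < n) :
    ol n (starPerm n w) i = n - 1 - ol n w (n - 1 - i) := by
  have h2 : n - 1 - i < n := by omega
  have hrev : (⟨i, h⟩ : Fin n).rev = ⟨n - 1 - i, h2⟩ := by
    ext; simp [Fin.val_rev]; omega
  simp only [ol, starPerm, dif_pos h, dif_pos h2, Equiv.trans_apply, Fin.revPerm_apply,
    hrev, Fin.val_rev]
  omega

lemma ol_inj (n : ℕ) (w : Equiv.Perm (Fin n)) (i k : ℕ) (hi : i < n) (hk : k < n)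
    (h : ol n w i = ol n w k) : i = k := by
  simp only [ol, dif_pos hi, dif_pos hk] at h
  have := w.injective (Fin.val_injective h)
  simpa [Fin.mk.injEq] using congrArg Fin.val this

lemma mem_desSet_star (n : ℕ) (w : Equiv.Perm (Fin n)) (i : ℕ) :
    i ∈ DesSet n (starPerm n w) ↔ i < n - 1 ∧ (n - 2 - i) ∈ DesSet n w := by
  simp only [DesSet, Finset.mem_filter, Finset.mem_range]
  constructor
  · rintro ⟨hi, hd⟩
    have hn2 : 2 ≤ n := by omega
    refine ⟨hi, by omega, ?_⟩
    rw [ol_star n w (i + 1) (by omega), ol_star n w i (by omega)] at hd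
    have e1 : n - 1 - (i + 1) = n - 2 - i := by omega
    have e2 : (n - 2 - i) + 1 = n - 1 - i := by omega
    rw [e1] at hd
    rw [e2]
    have b1 := ol_lt n (by omega) w (n - 2 - i)
    have b2 := ol_lt n (by omega) w (n - 1 - i)
    omega
  · rintro ⟨hi, _, hd⟩
    have hn2 : 2 ≤ n := by omega
    refine ⟨hi, ?_⟩
    rw [ol_star n w (i + 1) (by omega), ol_star n w i (by omega)]
    have e1 : n - 1 - (i + 1) = n - 2 - i := by omega
    have e2 : (n - 2 - i) + 1 = n - 1 - i := by omega
    rw [e1]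
    rw [e2] at hd
    have b1 := ol_lt n (by omega) w (n - 2 - i)
    have b2 := ol_lt n (by omega) w (n - 1 - i)
    omega

lemma desSet_star (n : ℕ) (w : Equiv.Perm (Fin n)) :
    DesSet n (starPerm n w) = (DesSet n w).image (fun i => n - 2 - i) := by
  ext i
  rw [mem_desSet_star, Finset.mem_image]
  constructor
  · rintro ⟨hi, hd⟩
    refine ⟨n - 2 - i, hd, by
      have : n - 2 - i < n - 1 := by
        simp only [DesSet, Finset.mem_filter, Finset.mem_range] at hd; exact hd.1
      omega⟩
  · rintro ⟨k, hk, rfl⟩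
    have hk1 : k < n - 1 := by
      simp only [DesSet, Finset.mem_filter, Finset.mem_range] at hk; exact hk.1
    have e : n - 2 - (n - 2 - k) = k := by omega
    exact ⟨by omega, by rwa [e]⟩

lemma desSet_lt (n : ℕ) (w : Equiv.Perm (Fin n)) (i : ℕ) (h : i ∈ DesSet n w) :
    i < n - 1 := by
  simp only [DesSet, Finset.mem_filter, Finset.mem_range] at h; exact h.1

lemma des_star (n : ℕ) (w : Equiv.Perm (Fin n)) : des n (starPerm n w) = des n w := by
  unfold des
  rw [desSet_star, Finset.card_image_of_injOn]
  intro a ha b hb hab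
  have h1 := desSet_lt n w a ha
  have h2 := desSet_lt n w b hb
  dsimp only at hab
  omega

lemma ndd_star (n : ℕ) (w : Equiv.Perm (Fin n)) (h : NoDoubleDescent n w) :
    NoDoubleDescent n (starPerm n w) := by
  intro i hi hi1
  rw [mem_desSet_star] at hi hi1
  obtain ⟨hlt, hd⟩ := hi
  obtain ⟨hlt1, hd1⟩ := hi1
  have h1 : n - 2 - (i + 1) + 1 = n - 2 - i := by omega
  exact h (n - 2 - (i + 1)) hd1 (by rwa [h1])

lemma nid_star (n : ℕ) (w : Equiv.Perm (Fin n)) (h : NoFinalDescent n w) :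
    NoInitialDescent n (starPerm n w) := by
  intro hc
  rw [mem_desSet_star] at hc
  exact h (by simpa using hc.2)

lemma nfd_star (n : ℕ) (w : Equiv.Perm (Fin n)) (h : NoInitialDescent n w) :
    NoFinalDescent n (starPerm n w) := by
  intro hc
  rw [mem_desSet_star] at hc
  obtain ⟨h1, h2⟩ := hc
  have : n - 2 - (n - 2) = 0 := by omega
  rw [this] at h2
  exact h h2

lemma starPerm_starPerm (n : ℕ) (w : Equiv.Perm (Fin n)) : starPerm n (starPerm n w) = w := by
  ext x
  simp [starPerm, Fin.rev_rev]

theorem card_hat_eq_card_tilde (n : ℕ) (hn : 1 ≤ n) (j : ℕ) (hj : j ≤ (n - 1) / 2) :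
    (Finset.univ.filter (fun w : Equiv.Perm (Fin n) =>
        NoDoubleDescent n w ∧ NoFinalDescent n w ∧ des n w = j)).card =
    (Finset.univ.filter (fun w : Equiv.Perm (Fin n) =>
        NoDoubleDescent n w ∧ NoInitialDescent n w ∧ des n w = j)).card := by
  apply Finset.card_bij' (fun w _ => starPerm n w) (fun w _ => starPerm n w)
  · intro w hw
    simp only [Finset.mem_filter, Finset.mem_univ, true_and] at hw ⊢
    exact ⟨ndd_star n w hw.1, nid_star n w hw.2.1, (des_star n w).trans hw.2.2⟩
  · intro w hw
    simp only [Finset.mem_filter, Finset.mem_univ, true_and] at hw ⊢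
    exact ⟨ndd_star n w hw.1, nfd_star n w hw.2.1, (des_star n w).trans hw.2.2⟩
  · intro w _; exact starPerm_starPerm n w
  · intro w _; exact starPerm_starPerm n w
end
end

section
/- For every K ⊆ [n-1], the polynomial Σ_{v ∈ W(K)} t^{des(v)} is palindromic of degree at most n−1; that is, its coefficient of t^i equals its coefficient of t^{n-1-i} for all 0 ≤ i ≤ n−1. -/
open Finset Polynomial

open scoped Classical

noncomputable section

/-! Call 0-based letters `a` and `a + 1` of the same block when `a + 1 ∈ K`, and read off the
block word (the block of each letter, by position) and the descent set of a permutation. Cut a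
permutation `u` into chunks, the maximal descending runs within one block, and sort the positions
by block, then by the end of their chunk, then from right to left: the resulting permutation lies
in `W(K)` and has the block word and descent set of `u`, and on `W(K)` it is the identity. So a
permutation of `W(K)` is determined by these two data. Reversing the one-line notation reverses
the block word and replaces the descent set by its reflected complement; followed by the sorting
step it is therefore an involution of `W(K)` turning `des v` into `n - 1 - des v`. -/

lemma orbIdx_mono (K : Finset ℕ) : Monotone (orbIdx K) := fun x y h => by
  unfold orbIdx
  gcongr

lemma orbIdx_add_two (K : Finset ℕ) (a : ℕ) :
    orbIdx K (a + 2) = orbIdx K (a + 1) + if a + 1 ∈ K then 0 else 1 := by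
  have hIcc : Icc 1 (a + 1) = insert (a + 1) (Icc 1 a) :=
    (insert_Icc_right_eq_Icc_add_one (by omega)).symm
  simp only [orbIdx, Nat.add_sub_cancel, show a + 2 - 1 = a + 1 by omega, hIcc, filter_insert]
  split_ifs with h
  · rfl
  · rw [card_insert_of_notMem (by simp)]
    omega

lemma exists_le_notMem_finset (s : Finset ℕ) (i : ℕ) : ∃ x, i ≤ x ∧ x ∉ s := by
  obtain ⟨m, hm⟩ := s.exists_nat_subset_range
  exact ⟨max i m, le_max_left i m, fun h => by simpa using hm h⟩

section ChunkEnd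

variable (s : Finset ℕ) {i j x : ℕ}

def chunkEnd (i : ℕ) : ℕ := Nat.find (exists_le_notMem_finset s i)

lemma le_chunkEnd (i : ℕ) : i ≤ chunkEnd s i := (Nat.find_spec (exists_le_notMem_finset s i)).1

lemma chunkEnd_notMem (i : ℕ) : chunkEnd s i ∉ s :=
  (Nat.find_spec (exists_le_notMem_finset s i)).2

lemma chunkEnd_le (h₁ : i ≤ x) (h₂ : x ∉ s) : chunkEnd s i ≤ x :=
  Nat.find_min' _ ⟨h₁, h₂⟩

lemma mem_of_le_of_lt_chunkEnd (h₁ : i ≤ x) (h₂ : x < chunkEnd s i) : x ∈ s := by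
  by_contra h
  exact Nat.find_min _ h₂ ⟨h₁, h⟩

lemma chunkEnd_mono (h : i ≤ j) : chunkEnd s i ≤ chunkEnd s j :=
  chunkEnd_le s (h.trans (le_chunkEnd s j)) (chunkEnd_notMem s j)

lemma chunkEnd_of_notMem (h : i ∉ s) : chunkEnd s i = i :=
  (chunkEnd_le s le_rfl h).antisymm (le_chunkEnd s i)

lemma chunkEnd_eq_of_le_of_le (h₁ : i ≤ j) (h₂ : j ≤ chunkEnd s i) :
    chunkEnd s j = chunkEnd s i :=
  (chunkEnd_le s h₂ (chunkEnd_notMem s i)).antisymm (chunkEnd_mono s h₁)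

lemma chunkEnd_succ_eq_iff : chunkEnd s (i + 1) = chunkEnd s i ↔ i ∈ s := by
  constructor
  · intro h
    by_contra hi
    have := le_chunkEnd s (i + 1)
    rw [h, chunkEnd_of_notMem s hi] at this
    omega
  · intro hi
    have : i ≠ chunkEnd s i := fun h => chunkEnd_notMem s i (h ▸ hi)
    exact chunkEnd_eq_of_le_of_le s (by omega) (by have := le_chunkEnd s i; omega)

end ChunkEnd

lemma Tuple.sort_inv_lt_sort_inv_iff {n : ℕ} {α : Type*} [LinearOrder α] {f : Fin n → α}
    (hf : Function.Injective f) {i j : Fin n} :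
    (sort f)⁻¹ i < (sort f)⁻¹ j ↔ f i < f j := by
  have hs : StrictMono (f ∘ sort f) :=
    (monotone_sort f).strictMono_of_injective (hf.comp (sort f).injective)
  simpa using (hs.lt_iff_lt (a := (sort f)⁻¹ i) (b := (sort f)⁻¹ j)).symm

def gluedSet (β : ℕ → ℕ) (D : Finset ℕ) : Finset ℕ := {x ∈ D | β (x + 1) = β x}

section ChunkSort

variable {n : ℕ} (β : ℕ → ℕ) (D : Finset ℕ)

def chunkKey (i : Fin n) : ℕ ×ₗ ℕ ×ₗ ℕᵒᵈ :=
  toLex (β i, toLex (chunkEnd (gluedSet β D) i, OrderDual.toDual (i : ℕ)))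

def chunkSort (n : ℕ) : Equiv.Perm (Fin n) := (Tuple.sort (chunkKey (n := n) β D))⁻¹

variable {β D}

lemma chunkKey_lt_chunkKey_iff {i j : Fin n} :
    chunkKey β D i < chunkKey β D j ↔ β i < β j ∨ β i = β j ∧
      (chunkEnd (gluedSet β D) i < chunkEnd (gluedSet β D) j ∨
        chunkEnd (gluedSet β D) i = chunkEnd (gluedSet β D) j ∧ (j : ℕ) < i) := by
  simp [chunkKey, Prod.Lex.toLex_lt_toLex]

lemma chunkKey_injective : Function.Injective (chunkKey (n := n) β D) := fun i j h => by
  simp only [chunkKey, toLex_inj, Prod.mk.injEq, OrderDual.toDual_inj, Fin.val_inj] at h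
  exact h.2.2

lemma chunkSort_lt_chunkSort_iff {i j : Fin n} :
    chunkSort β D n i < chunkSort β D n j ↔ chunkKey β D i < chunkKey β D j :=
  Tuple.sort_inv_lt_sort_inv_iff chunkKey_injective

lemma chunkKey_succ_lt_iff {i : ℕ} (hi : i + 1 < n) :
    chunkKey β D ⟨i + 1, hi⟩ < chunkKey β D (⟨i, by omega⟩ : Fin n) ↔
      β (i + 1) < β i ∨ β (i + 1) = β i ∧ i ∈ D := by
  have hmono := chunkEnd_mono (gluedSet β D) (Nat.le_succ i)
  have hglued := chunkEnd_succ_eq_iff (gluedSet β D) (i := i)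
  simp only [gluedSet, mem_filter] at hglued
  rw [chunkKey_lt_chunkKey_iff]
  constructor
  · rintro (h | ⟨hβ, h | ⟨hE, -⟩⟩)
    exacts [.inl h, absurd h (not_lt.2 hmono), .inr ⟨hβ, (hglued.1 hE).1⟩]
  · rintro (h | ⟨hβ, hD⟩)
    exacts [.inl h, .inr ⟨hβ, .inr ⟨hglued.2 ⟨hD, hβ⟩, by simp⟩⟩]

/-- Otherwise the position just left of `p` lies in the chunk of `q` and `p`, and its key falls
strictly between theirs. -/
lemma le_succ_of_chunkSort_succ {p q : Fin n}
    (hpq : (chunkSort β D n p : ℕ) + 1 = chunkSort β D n q) (hβ : β p = β q) :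
    (p : ℕ) ≤ q + 1 := by
  have hlt : chunkKey β D p < chunkKey β D q := chunkSort_lt_chunkSort_iff.1 (by omega)
  have hgap : ∀ j : Fin n,
      chunkKey β D p < chunkKey β D j → chunkKey β D j < chunkKey β D q → False := by
    intro j h₁ h₂
    rw [← chunkSort_lt_chunkSort_iff] at h₁ h₂
    omega
  rw [chunkKey_lt_chunkKey_iff] at hlt
  set s := gluedSet β D
  by_contra! hqp
  rcases hlt with hβ' | ⟨-, hE | ⟨hE, -⟩⟩
  · omega
  · exact chunkEnd_notMem s p
      (mem_of_le_of_lt_chunkEnd s (by have := le_chunkEnd s p; omega) hE)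
  · obtain ⟨j, hjp⟩ : ∃ j : Fin n, (j : ℕ) + 1 = p :=
      ⟨⟨p - 1, by omega⟩, Nat.sub_add_cancel (by omega)⟩
    have hj : (j : ℕ) ∈ s :=
      mem_of_le_of_lt_chunkEnd s (i := q) (by omega) (by have := le_chunkEnd s p; omega)
    have hjβ : β p = β j := by
      rw [← hjp]
      exact (mem_filter.1 hj).2
    have hjE : chunkEnd s p = chunkEnd s j := by
      rw [← hjp]
      exact (chunkEnd_succ_eq_iff s).2 hj
    apply hgap j <;> rw [chunkKey_lt_chunkKey_iff] <;> right
    · exact ⟨hjβ, .inr ⟨hjE, by omega⟩⟩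
    · exact ⟨hjβ.symm.trans hβ, .inr ⟨hjE.symm.trans hE, by omega⟩⟩

end ChunkSort

section Permutations

variable {n : ℕ} (K : Finset ℕ)

lemma ol_of_lt (w : Equiv.Perm (Fin n)) {x : ℕ} (hx : x < n) : ol n w x = w ⟨x, hx⟩ :=
  dif_pos hx

lemma mem_desSet {w : Equiv.Perm (Fin n)} {i : ℕ} :
    i ∈ DesSet n w ↔ i + 1 < n ∧ ol n w (i + 1) < ol n w i := by
  simp only [DesSet, mem_filter, mem_range]
  omega

lemma ol_lt_ol_of_Ico_subset_desSet {w : Equiv.Perm (Fin n)} {p q : ℕ} (hpq : p < q)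
    (h : Ico p q ⊆ DesSet n w) : ol n w q < ol n w p := by
  induction q, hpq using Nat.le_induction with
  | base => exact (mem_desSet.1 (h (by simp))).2
  | succ q hpq ih =>
    exact (mem_desSet.1 (h (by simp; omega))).2.trans
      (ih ((Ico_subset_Ico_right q.le_succ).trans h))

/-- `orbIdx` numbers 1-based letters, hence the shift. -/
def blockWord (u : Equiv.Perm (Fin n)) (x : ℕ) : ℕ := orbIdx K (ol n u x + 1)

lemma blockWord_val (u : Equiv.Perm (Fin n)) (i : Fin n) :
    blockWord K u i = orbIdx K (u i + 1) := by
  rw [blockWord, ol_of_lt u i.2]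

/-- The element of `W(K)` with the same block word and descent set as `u`. -/
def wsetRep (u : Equiv.Perm (Fin n)) : Equiv.Perm (Fin n) :=
  chunkSort (blockWord K u) (DesSet n u) n

lemma orbIdx_wsetRep (u : Equiv.Perm (Fin n)) (i : Fin n) :
    orbIdx K (wsetRep K u i + 1) = orbIdx K (u i + 1) := by
  set σ := Tuple.sort (chunkKey (n := n) (blockWord K u) (DesSet n u))
  let g : Fin n → ℕ := fun a => orbIdx K (u a + 1)
  have hσ : Monotone (g ∘ σ) := fun a b hab => by
    by_contra! h
    have hsorted := Tuple.monotone_sort (chunkKey (n := n) (blockWord K u) (DesSet n u)) hab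
    refine hsorted.not_gt (chunkKey_lt_chunkKey_iff.2 (.inl ?_))
    rw [blockWord_val, blockWord_val]
    exact h
  have hu : Monotone (g ∘ ⇑u⁻¹) := fun a b hab => by
    simpa [g] using orbIdx_mono K (Nat.add_le_add_right (Fin.le_def.1 hab) 1)
  simpa [g, σ, wsetRep, chunkSort] using
    (congr_fun (Tuple.unique_monotone hσ hu) (σ⁻¹ i)).symm

lemma blockWord_wsetRep (u : Equiv.Perm (Fin n)) :
    blockWord K (wsetRep K u) = blockWord K u := by
  funext x
  by_cases hx : x < n
  · simpa only [blockWord, ol_of_lt _ hx] using orbIdx_wsetRep K u ⟨x, hx⟩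
  · simp [blockWord, ol, hx]

lemma desSet_wsetRep (u : Equiv.Perm (Fin n)) : DesSet n (wsetRep K u) = DesSet n u := by
  ext i
  rw [mem_desSet, mem_desSet]
  refine and_congr_right fun hi => ?_
  rw [ol_of_lt _ hi, ol_of_lt _ (by omega : i < n), Fin.val_fin_lt, wsetRep,
    chunkSort_lt_chunkSort_iff, chunkKey_succ_lt_iff, mem_desSet,
    blockWord, blockWord, ol_of_lt _ hi, ol_of_lt _ (by omega : i < n)]
  have hmono₁ := orbIdx_mono K (a := u ⟨i + 1, hi⟩ + 1) (b := u ⟨i, by omega⟩ + 1)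
  have hmono₂ := orbIdx_mono K (a := u ⟨i, by omega⟩ + 1) (b := u ⟨i + 1, hi⟩ + 1)
  constructor
  · rintro (h | ⟨-, -, h⟩)
    · by_contra! h'
      exact h.not_ge (hmono₂ (by simpa using h'))
    · exact h
  · intro h
    rcases (hmono₁ (by omega)).lt_or_eq with h' | h'
    · exact .inl h'
    · exact .inr ⟨h', hi, h⟩

lemma wsetRep_mem_Wset (u : Equiv.Perm (Fin n)) : wsetRep K u ∈ Wset n K := by
  simp only [Wset, mem_filter, mem_univ, true_and]
  rintro (_ | a) hK hk
  · simp
  set w := wsetRep K u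
  have hpq : (w (w⁻¹ ⟨a, by omega⟩) : ℕ) + 1 = w (w⁻¹ ⟨a + 1, hk⟩) := by simp
  refine le_succ_of_chunkSort_succ hpq ?_
  rw [blockWord_val, blockWord_val, ← orbIdx_wsetRep K u, ← orbIdx_wsetRep K u]
  simp [w, orbIdx_add_two, hK]

lemma chunkKey_lt_of_mem_Wset {v : Equiv.Perm (Fin n)} (hv : v ∈ Wset n K) {a : ℕ}
    (ha : a + 1 < n) :
    chunkKey (blockWord K v) (DesSet n v) (v⁻¹ ⟨a, by omega⟩) <
      chunkKey (blockWord K v) (DesSet n v) (v⁻¹ ⟨a + 1, ha⟩) := by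
  set p := v⁻¹ ⟨a, by omega⟩
  set q := v⁻¹ ⟨a + 1, ha⟩
  have hvp : (v p : ℕ) = a := by simp [p]
  have hvq : (v q : ℕ) = a + 1 := by simp [q]
  rw [chunkKey_lt_chunkKey_iff, blockWord_val, blockWord_val, hvp, hvq, orbIdx_add_two]
  by_cases hK : a + 1 ∈ K
  swap
  · simp [hK]
  refine .inr ⟨by simp [hK], ?_⟩
  set s := gluedSet (blockWord K v) (DesSet n v)
  have hWset : (p : ℕ) ≤ q + 1 := by
    simpa only [Nat.add_sub_cancel] using (mem_filter.1 hv).2 (a + 1) hK ha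
  have hne : (p : ℕ) ≠ q := fun h => by
    simpa [hvp, hvq] using congrArg (fun x => (v x : ℕ)) (Fin.ext h)
  rcases (show (p : ℕ) = q + 1 ∨ (p : ℕ) < q by omega) with h | h
  · have hq : (q : ℕ) ∈ s := by
      refine mem_filter.2 ⟨mem_desSet.2 ⟨by omega, ?_⟩, ?_⟩
      · rw [← h, ol_of_lt v p.2, ol_of_lt v q.2, hvp, hvq]
        omega
      · rw [← h, blockWord_val, blockWord_val, hvp, hvq, orbIdx_add_two, if_pos hK, add_zero]
    exact .inr ⟨by rw [← (chunkEnd_succ_eq_iff s).2 hq, ← h], by omega⟩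
  · refine .inl ((chunkEnd_mono s h.le).lt_of_ne fun hE => ?_)
    have hrun : Ico (p : ℕ) q ⊆ DesSet n v := fun x hx =>
      (mem_filter.1 (mem_of_le_of_lt_chunkEnd s (mem_Ico.1 hx).1
        (by have := le_chunkEnd s q; rw [hE]; simp only [mem_Ico] at hx; omega))).1
    have := ol_lt_ol_of_Ico_subset_desSet h hrun
    rw [ol_of_lt v q.2, ol_of_lt v p.2] at this
    simp only [Fin.eta] at this
    omega

lemma wsetRep_congr {u u' : Equiv.Perm (Fin n)} (hβ : blockWord K u = blockWord K u')
    (hD : DesSet n u = DesSet n u') : wsetRep K u = wsetRep K u' := by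
  rw [wsetRep, wsetRep, hβ, hD]

lemma wsetRep_of_mem_Wset {v : Equiv.Perm (Fin n)} (hv : v ∈ Wset n K) : wsetRep K v = v := by
  rcases n with _ | m
  · exact Subsingleton.elim _ _
  have hsorted : StrictMono (chunkKey (blockWord K v) (DesSet (m + 1) v) ∘ ⇑v⁻¹) :=
    Fin.strictMono_iff_lt_succ.2 fun a => chunkKey_lt_of_mem_Wset K hv (Nat.succ_lt_succ a.2)
  have hsort : v⁻¹ = Tuple.sort (chunkKey (blockWord K v) (DesSet (m + 1) v)) :=
    Tuple.eq_sort_iff.2 ⟨hsorted.monotone, fun i j hij h => absurd (hsorted.injective h) hij.ne⟩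
  rw [wsetRep, chunkSort, ← hsort, inv_inv]

end Permutations

section Reversal

variable {n : ℕ} (K : Finset ℕ)

lemma ol_revPerm_trans (w : Equiv.Perm (Fin n)) {x : ℕ} (hx : x < n) :
    ol n (Fin.revPerm.trans w) x = ol n w (n - 1 - x) := by
  rw [ol_of_lt _ hx, ol_of_lt _ (by omega)]
  simp only [Equiv.trans_apply, Fin.revPerm_apply, Fin.rev]
  congr 3
  omega

lemma blockWord_revPerm_trans_congr {u u' : Equiv.Perm (Fin n)}
    (h : blockWord K u = blockWord K u') :
    blockWord K (Fin.revPerm.trans u) = blockWord K (Fin.revPerm.trans u') := by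
  funext x
  by_cases hx : x < n
  · simpa only [blockWord, ol_revPerm_trans _ hx] using congr_fun h (n - 1 - x)
  · simp [blockWord, ol, hx]

lemma desSet_revPerm_trans (w : Equiv.Perm (Fin n)) :
    DesSet n (Fin.revPerm.trans w) = {i ∈ range (n - 1) | n - 2 - i ∉ DesSet n w} := by
  ext i
  simp only [mem_filter, mem_range, mem_desSet]
  by_cases hi : i + 1 < n
  · rw [ol_revPerm_trans _ hi, ol_revPerm_trans _ (by omega),
      show n - 1 - (i + 1) = n - 2 - i by omega, show n - 1 - i = n - 2 - i + 1 by omega]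
    have hne : ol n w (n - 2 - i + 1) ≠ ol n w (n - 2 - i) := by
      rw [ol_of_lt _ (by omega), ol_of_lt _ (by omega)]
      exact Fin.val_injective.ne (w.injective.ne (Fin.ne_of_val_ne (by simp)))
    omega
  · omega

lemma des_revPerm_trans (w : Equiv.Perm (Fin n)) :
    des n (Fin.revPerm.trans w) = n - 1 - des n w := by
  rw [des, des, desSet_revPerm_trans]
  have hsub : DesSet n w ⊆ range (n - 1) := filter_subset _ _
  calc #{i ∈ range (n - 1) | n - 2 - i ∉ DesSet n w}
      = #{i ∈ range (n - 1) | i ∉ DesSet n w} := by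
        rw [card_filter, card_filter, ← sum_range_reflect]
        refine sum_congr rfl fun j hj => ?_
        rw [show n - 2 - (n - 1 - 1 - j) = j by simp only [mem_range] at hj; omega]
    _ = n - 1 - #(DesSet n w) := by
        rw [filter_notMem_eq_sdiff, card_sdiff_of_subset hsub, card_range]

lemma revPerm_trans_revPerm_trans (w : Equiv.Perm (Fin n)) :
    Fin.revPerm.trans (Fin.revPerm.trans w) = w :=
  Equiv.ext fun i => by simp

def wsetDual (v : Equiv.Perm (Fin n)) : Equiv.Perm (Fin n) := wsetRep K (Fin.revPerm.trans v)

lemma des_wsetDual (v : Equiv.Perm (Fin n)) : des n (wsetDual K v) = n - 1 - des n v := by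
  rw [← des_revPerm_trans, wsetDual, des, des, desSet_wsetRep]

lemma wsetDual_wsetDual {v : Equiv.Perm (Fin n)} (hv : v ∈ Wset n K) :
    wsetDual K (wsetDual K v) = v := by
  have hβ : blockWord K (Fin.revPerm.trans (wsetDual K v)) = blockWord K v := by
    rw [wsetDual, blockWord_revPerm_trans_congr K (blockWord_wsetRep K _),
      revPerm_trans_revPerm_trans]
  have hD : DesSet n (Fin.revPerm.trans (wsetDual K v)) = DesSet n v := by
    rw [desSet_revPerm_trans, wsetDual, desSet_wsetRep, ← desSet_revPerm_trans,
      revPerm_trans_revPerm_trans]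
  exact (wsetRep_congr K hβ hD).trans (wsetRep_of_mem_Wset K hv)

end Reversal

lemma coeff_sum_X_pow_des (n : ℕ) (K : Finset ℕ) (i : ℕ) :
    (∑ v ∈ Wset n K, (X : Polynomial ℕ) ^ des n v).coeff i =
      #{v ∈ Wset n K | des n v = i} := by
  simp [finsetSum_coeff, coeff_X_pow, eq_comm]

theorem hpoly_palindromic_general (n : ℕ) (K : Finset ℕ) (i : ℕ) (hi : i ≤ n - 1) :
    (∑ v ∈ Wset n K, (X : Polynomial ℕ) ^ des n v).coeff i =
    (∑ v ∈ Wset n K, (X : Polynomial ℕ) ^ des n v).coeff (n - 1 - i) := by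
  rw [coeff_sum_X_pow_des, coeff_sum_X_pow_des]
  apply card_nbij' (wsetDual K) (wsetDual K)
  all_goals
    intro v hv
    simp only [coe_filter, Set.mem_ofPred_eq] at hv ⊢
  · exact ⟨wsetRep_mem_Wset K _, by rw [des_wsetDual, hv.2]⟩
  · exact ⟨wsetRep_mem_Wset K _, by rw [des_wsetDual, hv.2]; omega⟩
  · exact wsetDual_wsetDual K hv.1
  · exact wsetDual_wsetDual K hv.1

theorem hpoly_palindromic (n : ℕ) (hn : 1 ≤ n) (K : Finset ℕ)
    (hK : ∀ k ∈ K, 1 ≤ k ∧ k ≤ n - 1) (i : ℕ) (hi : i ≤ n - 1) :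
    (∑ v ∈ Wset n K, (X : Polynomial ℕ) ^ des n v).coeff i =
    (∑ v ∈ Wset n K, (X : Polynomial ℕ) ^ des n v).coeff (n - 1 - i) :=
  hpoly_palindromic_general n K i hi
end
end

section
/- For each permutation w ∈ S_n, the hop equivalence class Hop(w) under valley hopping satisfies Σ_{u ∈ Hop(w)} t^{des(u)} = t^{pk(w)} (1+t)^{n-1-2·pk(w)}, where pk(w) is the number of peaks of w. -/
open Finset Polynomial

open scoped Classical

noncomputable section

/-!
Split a word with distinct letters at its largest letter `m`, as `P ++ m :: Q`. If `P` and `Q`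
are both nonempty, `m` is a peak: no hop moves `m` or crosses it, so the hop class is
`{P' ++ m :: Q'}` with `P'`, `Q'` ranging over the classes of `P` and `Q`, and the descent right
after `m` contributes a factor `t`. If `m` sits at an end, it is free and its only hop carries it
to the other end, so the class is `{m :: K, K ++ [m]}` with `K` ranging over the class of the
rest, which contributes a factor `1 + t`. Induction on the length gives the formula.
Reversing a word turns hops into inverse hops, which reduces the hops into `P ++ m :: Q` to the
hops out of its reverse.
-/

open List

def listDes : List ℕ → ℕ
  | a :: b :: t => (if b < a then 1 else 0) + listDes (b :: t)
  | _ => 0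

def listPk : List ℕ → ℕ
  | a :: b :: c :: t => (if a < b ∧ c < b then 1 else 0) + listPk (b :: c :: t)
  | _ => 0

theorem listDes_cons (a : ℕ) (l : List ℕ) :
    listDes (a :: l) = (if l.headD a < a then 1 else 0) + listDes l := by
  cases l <;> simp [listDes]

theorem listPk_cons_cons (a b : ℕ) (l : List ℕ) :
    listPk (a :: b :: l) = (if a < b ∧ l.headD b < b then 1 else 0) + listPk (b :: l) := by
  cases l <;> simp [listPk]

theorem headD_append_cons_lt_iff {a m : ℕ} (ha : a < m) (P Q : List ℕ) :
    (P ++ m :: Q).headD a < a ↔ P.headD a < a := by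
  cases P <;> simp [ha.not_gt]

theorem listDes_append_cons_of_lt {m : ℕ} {P Q : List ℕ} (hP : ∀ x ∈ P, x < m)
    (hQ : ∀ x ∈ Q, x < m) :
    listDes (P ++ m :: Q) = listDes P + listDes Q + if Q = [] then 0 else 1 := by
  induction P with
  | nil => cases Q <;> simp_all [listDes, add_comm]
  | cons a P ih =>
    rw [cons_append, listDes_cons, listDes_cons, ih fun x hx => hP x (mem_cons_of_mem a hx)]
    simp only [headD_append_cons_lt_iff (hP a mem_cons_self)]
    omega

theorem listPk_append_cons_of_lt {m : ℕ} {P Q : List ℕ} (hP : ∀ x ∈ P, x < m)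
    (hQ : ∀ x ∈ Q, x < m) :
    listPk (P ++ m :: Q) = listPk P + listPk Q + if P = [] ∨ Q = [] then 0 else 1 := by
  induction P with
  | nil =>
    cases Q with
    | nil => simp [listPk]
    | cons b t => simp [listPk_cons_cons, listPk, (hQ b mem_cons_self).not_gt]
  | cons a P ih =>
    have ih := ih fun x hx => hP x (mem_cons_of_mem a hx)
    cases P with
    | nil =>
      cases Q with
      | nil => simp [listPk]
      | cons c t =>
        simp [listPk_cons_cons, listPk, hP a mem_cons_self, hQ c mem_cons_self,
          (hQ c mem_cons_self).not_gt, add_comm]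
    | cons b P =>
      rw [cons_append, cons_append, listPk_cons_cons, ← cons_append, ih, listPk_cons_cons]
      simp only [headD_append_cons_lt_iff (hP b (by simp)), reduceCtorEq, false_or]
      omega

theorem two_mul_listPk_le : ∀ l : List ℕ, 2 * listPk l ≤ l.length - 1
  | a :: b :: c :: t => by
    have hbct := two_mul_listPk_le (b :: c :: t)
    have hct := two_mul_listPk_le (c :: t)
    rw [listPk]
    split_ifs with hpeak
    · have hnext : listPk (b :: c :: t) = listPk (c :: t) := by
        rw [listPk_cons_cons, if_neg fun h => hpeak.2.not_gt h.1, zero_add]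
      simp only [length_cons, hnext] at hct ⊢
      omega
    · simp only [length_cons] at hbct ⊢
      omega
  | [] | [_] | [_, _] => by simp [listPk]

theorem listDes_eq_card : ∀ l : List ℕ,
    listDes l = #{i ∈ range (l.length - 1) | l.getD (i + 1) 0 < l.getD i 0}
  | a :: b :: t => by
    rw [listDes, listDes_eq_card (b :: t), card_filter, card_filter]
    simp only [length_cons, Nat.add_sub_cancel]
    rw [Finset.sum_range_succ']
    simp only [getD_cons_succ, getD_cons_zero]
    omega
  | [] | [_] => by simp [listDes]

theorem listPk_eq_card : ∀ l : List ℕ, listPk l =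
    #{i ∈ range (l.length - 2) |
      l.getD i 0 < l.getD (i + 1) 0 ∧ l.getD (i + 2) 0 < l.getD (i + 1) 0}
  | a :: b :: c :: t => by
    rw [listPk, listPk_eq_card (b :: c :: t), card_filter, card_filter]
    simp only [length_cons, Nat.reduceSubDiff]
    rw [Finset.sum_range_succ']
    simp only [getD_cons_succ, getD_cons_zero]
    omega
  | [] | [_] | [_, _] => by simp [listPk]

abbrev listHopEquiv (v u : List ℕ) : Prop := Relation.EqvGen hopStep v u

theorem Relation.EqvGen.iff_of_forall_rel_iff {α : Type*} {r : α → α → Prop} {S : α → Prop}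
    (hS : ∀ a b, r a b → (S a ↔ S b)) {a b : α} (h : Relation.EqvGen r a b) : S a ↔ S b := by
  induction h with
  | rel a b h => exact hS a b h
  | refl => exact Iff.rfl
  | symm _ _ _ ih => exact ih.symm
  | trans _ _ _ _ _ ih₁ ih₂ => exact ih₁.trans ih₂

theorem hopStep.perm {v u : List ℕ} (h : hopStep v u) : v ~ u := by
  obtain ⟨A, B, C, j, -, -, -, -, rfl, rfl⟩ := h
  exact perm_middle.symm.append_left A

theorem listHopEquiv.perm {v u : List ℕ} (h : listHopEquiv v u) : v ~ u := by
  induction h with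
  | rel _ _ h => exact h.perm
  | refl => exact .refl _
  | symm _ _ _ ih => exact ih.symm
  | trans _ _ _ _ _ ih₁ ih₂ => exact ih₁.trans ih₂

theorem listHopEquiv.forall_lt {v u : List ℕ} {m : ℕ} (h : listHopEquiv v u)
    (hv : ∀ x ∈ v, x < m) : ∀ x ∈ u, x < m :=
  fun x hx => hv x (h.perm.symm.subset hx)

theorem listHopEquiv.ne_nil {v u : List ℕ} (h : listHopEquiv v u) (hv : v ≠ []) : u ≠ [] :=
  fun hu => hv (hu ▸ h.perm).eq_nil

theorem not_hopStep_nil_left (u : List ℕ) : ¬ hopStep [] u := by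
  rintro ⟨A, B, C, j, -, -, -, -, h, -⟩
  simp at h

theorem not_hopStep_nil_right (v : List ℕ) : ¬ hopStep v [] := by
  rintro ⟨A, B, C, j, -, -, -, -, -, h⟩
  simp at h

theorem hopStep.reverse {v u : List ℕ} (h : hopStep v u) : hopStep u.reverse v.reverse := by
  obtain ⟨A, B, C, j, hB, hBj, hA, hC, rfl, rfl⟩ := h
  exact ⟨C.reverse, B.reverse, A.reverse, j, by simpa using hB, by simpa using hBj,
    by simpa using hC, by simpa using hA, by simp, by simp⟩

theorem hopStep_append_cons_left {m : ℕ} {P P' : List ℕ} (Q : List ℕ)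
    (hP : ∀ x ∈ P, x < m) (h : hopStep P P') : hopStep (P ++ m :: Q) (P' ++ m :: Q) := by
  obtain ⟨A, B, C, j, hB, hBj, hA, hC, rfl, rfl⟩ := h
  have hj : j < m := hP j (by simp)
  refine ⟨A, B, C ++ m :: Q, j, hB, hBj, hA, ?_, by simp, by simp⟩
  cases C <;> simp_all

theorem hopStep_append_cons_right (P : List ℕ) {m : ℕ} {Q Q' : List ℕ}
    (hQ : ∀ x ∈ Q, x < m) (h : hopStep Q Q') : hopStep (P ++ m :: Q) (P ++ m :: Q') := by
  have hQ' : ∀ x ∈ Q'.reverse, x < m :=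
    fun x hx => hQ x (h.perm.symm.subset (by simpa using hx))
  simpa using (hopStep_append_cons_left P.reverse hQ' h.reverse).reverse

theorem listHopEquiv.map_of_forall_lt {f : List ℕ → List ℕ} {m : ℕ}
    (hf : ∀ a b, (∀ x ∈ a, x < m) → hopStep a b → hopStep (f a) (f b)) {a b : List ℕ}
    (h : listHopEquiv a b) (ha : ∀ x ∈ a, x < m) : listHopEquiv (f a) (f b) := by
  induction h with
  | rel a b h => exact .rel _ _ (hf a b ha h)
  | refl => exact .refl _
  | symm a b h ih => exact .symm _ _ (ih (listHopEquiv.forall_lt (.symm _ _ h) ha))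
  | trans _ _ _ h _ ih₁ ih₂ => exact .trans _ _ _ (ih₁ ha) (ih₂ (listHopEquiv.forall_lt h ha))

theorem listHopEquiv_append_cons {m : ℕ} {P P' Q Q' : List ℕ} (hP : ∀ x ∈ P, x < m)
    (hQ : ∀ x ∈ Q, x < m) (hPP' : listHopEquiv P P') (hQQ' : listHopEquiv Q Q') :
    listHopEquiv (P ++ m :: Q) (P' ++ m :: Q') :=
  .trans _ _ _ (hPP'.map_of_forall_lt (fun _ _ ha h => hopStep_append_cons_left Q ha h) hP)
    (hQQ'.map_of_forall_lt (fun _ _ ha h => hopStep_append_cons_right P' ha h) hQ)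

theorem hopStep_append_cons_cases {m : ℕ} {P Q y : List ℕ} (hP : ∀ x ∈ P, x < m)
    (hQ : ∀ x ∈ Q, x < m) (h : hopStep (P ++ m :: Q) y) :
    (∃ P', hopStep P P' ∧ y = P' ++ m :: Q) ∨ (∃ Q', hopStep Q Q' ∧ y = P ++ m :: Q') ∨
      (P = [] ∧ y = Q ++ [m]) := by
  obtain ⟨A, B, C, j, hB, hBj, hA, hC, hv, rfl⟩ := h
  have hmP : m ∉ P := fun h => (hP m h).false
  have hmQ : m ∉ Q := fun h => (hQ m h).false
  by_cases hjm : j = m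
  · -- a hop needs larger letters on both sides; none exceed `m`, so it jumps over all of `Q`
    subst hjm
    obtain ⟨rfl, -, rfl⟩ := (append_cons_inj_of_notMem hmP hmQ).1 hv
    have hP0 : P = [] := by
      cases hlast : P.getLast? with
      | none => exact getLast?_eq_none_iff.1 hlast
      | some a => exact absurd (hA a hlast) (hP a (mem_of_mem_getLast? hlast)).not_gt
    have hC0 : C = [] := by
      cases hhead : C.head? with
      | none => exact head?_eq_none_iff.1 hhead
      | some c => exact absurd (hC c hhead) (hQ c (by simp [mem_of_mem_head? hhead])).not_gt
    exact Or.inr (Or.inr ⟨hP0, by simp [hP0, hC0]⟩)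
  have hj : j < m := by
    have hjv : j ∈ P ++ m :: Q := hv ▸ by simp
    simp only [mem_append, List.mem_cons] at hjv
    exact hjv.elim (hP j) (·.elim (absurd · hjm) (hQ j))
  have hmv : m ∈ A ++ j :: (B ++ C) := hv ▸ by simp
  simp only [mem_append, List.mem_cons] at hmv
  rcases hmv with hmA | rfl | hmB | hmC
  · obtain ⟨A₁, A₂, rfl⟩ := append_of_mem hmA
    rw [append_assoc, cons_append] at hv
    obtain ⟨rfl, -, rfl⟩ := (append_cons_inj_of_notMem hmP hmQ).1 hv
    refine Or.inr (Or.inl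
      ⟨A₂ ++ (B ++ j :: C), ⟨A₂, B, C, j, hB, hBj, ?_, hC, rfl, rfl⟩, by simp⟩)
    intro x hx
    exact hA x (by simp [getLast?_cons, Option.mem_def.1 hx])
  · exact absurd rfl hjm
  · exact absurd (hBj m hmB) hj.not_gt
  · obtain ⟨C₁, C₂, rfl⟩ := append_of_mem hmC
    rw [show A ++ j :: (B ++ (C₁ ++ m :: C₂)) = (A ++ j :: (B ++ C₁)) ++ m :: C₂ by simp]
      at hv
    obtain ⟨rfl, -, rfl⟩ := (append_cons_inj_of_notMem hmP hmQ).1 hv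
    refine Or.inl
      ⟨A ++ (B ++ j :: C₁), ⟨A, B, C₁, j, hB, hBj, hA, ?_, rfl, rfl⟩, by simp⟩
    intro x hx
    exact hC x (by simp [Option.mem_def.1 hx])

theorem hopStep_to_append_cons_cases {m : ℕ} {P Q y : List ℕ} (hP : ∀ x ∈ P, x < m)
    (hQ : ∀ x ∈ Q, x < m) (h : hopStep y (P ++ m :: Q)) :
    (∃ P', hopStep P' P ∧ y = P' ++ m :: Q) ∨ (∃ Q', hopStep Q' Q ∧ y = P ++ m :: Q') ∨
      (Q = [] ∧ y = m :: P) := by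
  have h' : hopStep (Q.reverse ++ m :: P.reverse) y.reverse := by simpa using h.reverse
  rcases hopStep_append_cons_cases (by simpa using hQ) (by simpa using hP) h' with
    ⟨Q', hQ', hy⟩ | ⟨P', hP', hy⟩ | ⟨hQ0, hy⟩
  · refine Or.inr (Or.inl ⟨Q'.reverse, by simpa using hQ'.reverse, ?_⟩)
    rw [← reverse_reverse y, hy]
    simp
  · refine Or.inl ⟨P'.reverse, by simpa using hP'.reverse, ?_⟩
    rw [← reverse_reverse y, hy]
    simp
  · refine Or.inr (Or.inr ⟨reverse_eq_nil_iff.1 hQ0, ?_⟩)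
    rw [← reverse_reverse y, hy]
    simp

theorem exists_append_cons_iff_of_hopStep {m : ℕ} {P Q a b : List ℕ} (hP : ∀ x ∈ P, x < m)
    (hQ : ∀ x ∈ Q, x < m) (hP0 : P ≠ []) (hQ0 : Q ≠ []) (hab : hopStep a b) :
    (∃ P' Q', listHopEquiv P P' ∧ listHopEquiv Q Q' ∧ a = P' ++ m :: Q') ↔
      ∃ P' Q', listHopEquiv P P' ∧ listHopEquiv Q Q' ∧ b = P' ++ m :: Q' := by
  constructor
  · rintro ⟨P', Q', hPP', hQQ', rfl⟩
    rcases hopStep_append_cons_cases (hPP'.forall_lt hP) (hQQ'.forall_lt hQ) hab with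
      ⟨P'', h, rfl⟩ | ⟨Q'', h, rfl⟩ | ⟨hP'0, -⟩
    · exact ⟨P'', Q', .trans _ _ _ hPP' (.rel _ _ h), hQQ', rfl⟩
    · exact ⟨P', Q'', hPP', .trans _ _ _ hQQ' (.rel _ _ h), rfl⟩
    · exact absurd hP'0 (hPP'.ne_nil hP0)
  · rintro ⟨P', Q', hPP', hQQ', rfl⟩
    rcases hopStep_to_append_cons_cases (hPP'.forall_lt hP) (hQQ'.forall_lt hQ) hab with
      ⟨P'', h, rfl⟩ | ⟨Q'', h, rfl⟩ | ⟨hQ'0, -⟩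
    · exact ⟨P'', Q', .trans _ _ _ hPP' (.symm _ _ (.rel _ _ h)), hQQ', rfl⟩
    · exact ⟨P', Q'', hPP', .trans _ _ _ hQQ' (.symm _ _ (.rel _ _ h)), rfl⟩
    · exact absurd hQ'0 (hQQ'.ne_nil hQ0)

theorem listHopEquiv_append_cons_iff {m : ℕ} {P Q x : List ℕ} (hP : ∀ x ∈ P, x < m)
    (hQ : ∀ x ∈ Q, x < m) (hP0 : P ≠ []) (hQ0 : Q ≠ []) :
    listHopEquiv (P ++ m :: Q) x ↔
      ∃ P' Q', listHopEquiv P P' ∧ listHopEquiv Q Q' ∧ x = P' ++ m :: Q' := by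
  refine ⟨fun h => (Relation.EqvGen.iff_of_forall_rel_iff
    (fun a b => exists_append_cons_iff_of_hopStep (a := a) (b := b) hP hQ hP0 hQ0) h).1
      ⟨P, Q, .refl _, .refl _, rfl⟩, ?_⟩
  rintro ⟨P', Q', hPP', hQQ', rfl⟩
  exact listHopEquiv_append_cons hP hQ hPP' hQQ'

theorem hopStep_cons_append_singleton {m : ℕ} {T : List ℕ} (hT : ∀ x ∈ T, x < m)
    (hT0 : T ≠ []) : hopStep (m :: T) (T ++ [m]) :=
  ⟨[], T, [], m, hT0, hT, by simp, by simp, by simp, by simp⟩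

theorem exists_cons_or_append_singleton_iff_of_hopStep {m : ℕ} {T a b : List ℕ}
    (hT : ∀ x ∈ T, x < m) (hT0 : T ≠ []) (hab : hopStep a b) :
    (∃ K, listHopEquiv T K ∧ (a = m :: K ∨ a = K ++ [m])) ↔
      ∃ K, listHopEquiv T K ∧ (b = m :: K ∨ b = K ++ [m]) := by
  constructor
  · rintro ⟨K, hTK, rfl | rfl⟩
    · rcases hopStep_append_cons_cases (P := []) (by simp) (hTK.forall_lt hT) hab with
        ⟨_, h, -⟩ | ⟨K', h, rfl⟩ | ⟨-, rfl⟩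
      · exact absurd h (not_hopStep_nil_left _)
      · exact ⟨K', .trans _ _ _ hTK (.rel _ _ h), Or.inl rfl⟩
      · exact ⟨K, hTK, Or.inr rfl⟩
    · rcases hopStep_append_cons_cases (Q := []) (hTK.forall_lt hT) (by simp) hab with
        ⟨K', h, rfl⟩ | ⟨_, h, -⟩ | ⟨hK0, -⟩
      · exact ⟨K', .trans _ _ _ hTK (.rel _ _ h), Or.inr rfl⟩
      · exact absurd h (not_hopStep_nil_left _)
      · exact absurd hK0 (hTK.ne_nil hT0)
  · rintro ⟨K, hTK, rfl | rfl⟩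
    · rcases hopStep_to_append_cons_cases (P := []) (by simp) (hTK.forall_lt hT) hab with
        ⟨_, h, -⟩ | ⟨K', h, rfl⟩ | ⟨hK0, -⟩
      · exact absurd h (not_hopStep_nil_right _)
      · exact ⟨K', .trans _ _ _ hTK (.symm _ _ (.rel _ _ h)), Or.inl rfl⟩
      · exact absurd hK0 (hTK.ne_nil hT0)
    · rcases hopStep_to_append_cons_cases (Q := []) (hTK.forall_lt hT) (by simp) hab with
        ⟨K', h, rfl⟩ | ⟨_, h, -⟩ | ⟨-, rfl⟩
      · exact ⟨K', .trans _ _ _ hTK (.symm _ _ (.rel _ _ h)), Or.inr rfl⟩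
      · exact absurd h (not_hopStep_nil_right _)
      · exact ⟨K, hTK, Or.inl rfl⟩

theorem listHopEquiv_cons_iff {m : ℕ} {T x : List ℕ} (hT : ∀ x ∈ T, x < m)
    (hT0 : T ≠ []) :
    listHopEquiv (m :: T) x ↔ ∃ K, listHopEquiv T K ∧ (x = m :: K ∨ x = K ++ [m]) := by
  refine ⟨fun h => (Relation.EqvGen.iff_of_forall_rel_iff
    (fun a b => exists_cons_or_append_singleton_iff_of_hopStep (a := a) (b := b) hT hT0) h).1
      ⟨T, .refl _, Or.inl rfl⟩, ?_⟩
  rintro ⟨K, hTK, hx⟩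
  have hfront : listHopEquiv (m :: T) (m :: K) := by
    simpa using listHopEquiv_append_cons (P := []) (by simp) hT (.refl _) hTK
  rcases hx with rfl | rfl
  · exact hfront
  · exact .trans _ _ _ hfront
      (.rel _ _ (hopStep_cons_append_singleton (hTK.forall_lt hT) (hTK.ne_nil hT0)))

def hopClass (l : List ℕ) : Finset (List ℕ) :=
  l.permutations.toFinset.filter (listHopEquiv l)

theorem mem_hopClass {l x : List ℕ} : x ∈ hopClass l ↔ listHopEquiv l x := by
  simp only [hopClass, Finset.mem_filter, mem_toFinset, mem_permutations, and_iff_right_iff_imp]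
  exact fun h => h.perm.symm

theorem hopClass_eq_of_listHopEquiv {l l' : List ℕ} (h : listHopEquiv l l') :
    hopClass l = hopClass l' := by
  ext x
  simp only [mem_hopClass]
  exact ⟨.trans _ _ _ (.symm _ _ h), .trans _ _ _ h⟩

theorem hopClass_eq_singleton {l : List ℕ} (hl : l.length ≤ 1) : hopClass l = {l} := by
  ext x
  rw [mem_hopClass, Finset.mem_singleton]
  refine ⟨fun h => ?_, fun h => h ▸ .refl _⟩
  match l, hl with
  | [], _ => exact h.perm.symm.eq_nil
  | [_], _ => exact perm_singleton.1 h.perm.symm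

theorem hopClass_append_cons {m : ℕ} {P Q : List ℕ} (hP : ∀ x ∈ P, x < m)
    (hQ : ∀ x ∈ Q, x < m) (hP0 : P ≠ []) (hQ0 : Q ≠ []) :
    hopClass (P ++ m :: Q) = (hopClass P ×ˢ hopClass Q).image fun z => z.1 ++ m :: z.2 := by
  ext x
  simp only [mem_hopClass, listHopEquiv_append_cons_iff hP hQ hP0 hQ0, Finset.mem_image,
    Finset.mem_product, Prod.exists]
  grind

theorem hopClass_cons {m : ℕ} {T : List ℕ} (hT : ∀ x ∈ T, x < m) (hT0 : T ≠ []) :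
    hopClass (m :: T) = (hopClass T).image (m :: ·) ∪ (hopClass T).image (· ++ [m]) := by
  ext x
  simp only [mem_hopClass, listHopEquiv_cons_iff hT hT0, Finset.mem_union, Finset.mem_image]
  grind

theorem sum_hopClass_append_cons {m : ℕ} {P Q : List ℕ} (hP : ∀ x ∈ P, x < m)
    (hQ : ∀ x ∈ Q, x < m) (hP0 : P ≠ []) (hQ0 : Q ≠ []) :
    ∑ u ∈ hopClass (P ++ m :: Q), (X : ℕ[X]) ^ listDes u =
      X * ((∑ u ∈ hopClass P, (X : ℕ[X]) ^ listDes u) *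
        ∑ u ∈ hopClass Q, (X : ℕ[X]) ^ listDes u) := by
  have hinj : Set.InjOn (fun z : List ℕ × List ℕ => z.1 ++ m :: z.2)
      ↑(hopClass P ×ˢ hopClass Q) := by
    rintro ⟨P₁, Q₁⟩ h₁ ⟨P₂, Q₂⟩ h₂ h
    simp only [Finset.coe_product, Set.mem_prod, Finset.mem_coe, mem_hopClass] at h₁ h₂
    obtain ⟨rfl, -, rfl⟩ := (append_cons_inj_of_notMem
      (fun h => (h₁.1.forall_lt hP m h).false) (fun h => (h₁.2.forall_lt hQ m h).false)).1 h
    rfl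
  rw [hopClass_append_cons hP hQ hP0 hQ0, Finset.sum_image hinj, Finset.sum_product,
    Finset.sum_mul_sum, Finset.mul_sum]
  refine Finset.sum_congr rfl fun P' hP' => ?_
  rw [Finset.mul_sum]
  refine Finset.sum_congr rfl fun Q' hQ' => ?_
  rw [mem_hopClass] at hP' hQ'
  rw [listDes_append_cons_of_lt (hP'.forall_lt hP) (hQ'.forall_lt hQ), if_neg (hQ'.ne_nil hQ0)]
  ring

theorem sum_hopClass_cons {m : ℕ} {T : List ℕ} (hT : ∀ x ∈ T, x < m) (hT0 : T ≠ []) :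
    ∑ u ∈ hopClass (m :: T), (X : ℕ[X]) ^ listDes u =
      (1 + X) * ∑ u ∈ hopClass T, (X : ℕ[X]) ^ listDes u := by
  have hdisj : Disjoint ((hopClass T).image (m :: ·)) ((hopClass T).image (· ++ [m])) := by
    simp only [Finset.disjoint_left, Finset.mem_image, not_exists, not_and]
    rintro _ ⟨K, hK, rfl⟩ K' hK' h
    rw [mem_hopClass] at hK'
    obtain ⟨k, K'', rfl⟩ := exists_cons_of_ne_nil (hK'.ne_nil hT0)
    simp only [cons_append, cons.injEq] at h
    exact (hK'.forall_lt hT m (h.1 ▸ mem_cons_self)).false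
  rw [hopClass_cons hT hT0, Finset.sum_union hdisj, Finset.sum_image (by simp),
    Finset.sum_image (by simp), add_mul, one_mul, Finset.mul_sum, add_comm]
  congr 1 <;> refine Finset.sum_congr rfl fun K hK => ?_ <;> rw [mem_hopClass] at hK
  · rw [listDes_append_cons_of_lt (Q := []) (hK.forall_lt hT) (by simp)]
    simp [listDes]
  · rw [← nil_append (m :: K), listDes_append_cons_of_lt (by simp) (hK.forall_lt hT),
      if_neg (hK.ne_nil hT0)]
    simp [listDes, pow_add, mul_comm]

theorem exists_eq_append_cons_of_forall_lt {l : List ℕ} (hl : l.Nodup) (hne : l ≠ []) :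
    ∃ P m Q, l = P ++ m :: Q ∧ (∀ x ∈ P, x < m) ∧ ∀ x ∈ Q, x < m := by
  obtain ⟨m, hm, hmax⟩ := l.toFinset.exists_max_image id (by simpa using hne)
  obtain ⟨P, Q, rfl⟩ := append_of_mem (mem_toFinset.1 hm)
  have hmP : m ∉ P := fun h => (nodup_append.1 hl).2.2 m h m mem_cons_self rfl
  have hmQ : m ∉ Q := (nodup_cons.1 (nodup_append.1 hl).2.1).1
  refine ⟨P, m, Q, rfl, fun x hx => ?_, fun x hx => ?_⟩
  · exact (hmax x (by simp [hx])).lt_of_ne (ne_of_mem_of_not_mem hx hmP)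
  · exact (hmax x (by simp [hx])).lt_of_ne (ne_of_mem_of_not_mem hx hmQ)

theorem sum_hopClass (l : List ℕ) (hl : l.Nodup) :
    ∑ u ∈ hopClass l, (X : ℕ[X]) ^ listDes u =
      X ^ listPk l * (1 + X) ^ (l.length - 1 - 2 * listPk l) := by
  rcases eq_or_ne l [] with rfl | hne
  · simp [hopClass_eq_singleton, listDes, listPk]
  obtain ⟨P, m, Q, rfl, hP, hQ⟩ := exists_eq_append_cons_of_forall_lt hl hne
  have hPnd : P.Nodup := (nodup_append.1 hl).1
  have hQnd : Q.Nodup := (nodup_cons.1 (nodup_append.1 hl).2.1).2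
  have hPbound := two_mul_listPk_le P
  have hQbound := two_mul_listPk_le Q
  rw [listPk_append_cons_of_lt hP hQ, length_append, length_cons]
  rcases eq_or_ne P [] with rfl | hP0 <;> rcases eq_or_ne Q [] with rfl | hQ0
  · simp [hopClass_eq_singleton, listDes, listPk]
  · have hQlen := length_pos_iff.2 hQ0
    rw [nil_append, sum_hopClass_cons hQ hQ0, sum_hopClass Q hQnd]
    simp only [listPk, length_nil, zero_add, true_or, if_true, add_zero, Nat.add_sub_cancel,
      show Q.length - 2 * listPk Q = Q.length - 1 - 2 * listPk Q + 1 by omega]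
    ring
  · have hPlen := length_pos_iff.2 hP0
    rw [hopClass_eq_of_listHopEquiv (.symm _ _ (.rel _ _ (hopStep_cons_append_singleton hP hP0))),
      sum_hopClass_cons hP hP0, sum_hopClass P hPnd]
    simp only [listPk, length_nil, zero_add, or_true, if_true, add_zero, Nat.add_sub_cancel,
      show P.length - 2 * listPk P = P.length - 1 - 2 * listPk P + 1 by omega]
    ring
  · have hPlen := length_pos_iff.2 hP0
    have hQlen := length_pos_iff.2 hQ0
    rw [sum_hopClass_append_cons hP hQ hP0 hQ0, sum_hopClass P hPnd, sum_hopClass Q hQnd,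
      if_neg (by simp [hP0, hQ0]),
      show P.length + (Q.length + 1) - 1 - 2 * (listPk P + listPk Q + 1)
        = (P.length - 1 - 2 * listPk P) + (Q.length - 1 - 2 * listPk Q) by omega]
    ring
termination_by l.length

theorem Relation.EqvGen.comap_iff {α β : Type*} {f : α → β} (hf : Function.Injective f)
    {r : β → β → Prop} (hr : ∀ a y, Relation.EqvGen r (f a) y → y ∈ Set.range f)
    {a b : α} :
    Relation.EqvGen (fun a b => r (f a) (f b)) a b ↔ Relation.EqvGen r (f a) (f b) := by
  refine ⟨fun h => ?_, fun h => ?_⟩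
  · induction h with
    | rel _ _ h => exact .rel _ _ h
    | refl => exact .refl _
    | symm _ _ _ ih => exact .symm _ _ ih
    | trans _ _ _ _ _ ih₁ ih₂ => exact .trans _ _ _ ih₁ ih₂
  · generalize hx : f a = x at h
    generalize hy : f b = y at h
    induction h generalizing a b with
    | rel x y h => subst hx hy; exact .rel _ _ h
    | refl => exact hf (hx.trans hy.symm) ▸ .refl _
    | symm x y _ ih => exact .symm _ _ (ih hy hx)
    | trans x y z hxy _ ih₁ ih₂ =>
      obtain ⟨c, rfl⟩ := hr a y (hx ▸ hxy)
      exact .trans _ _ _ (ih₁ hx rfl) (ih₂ rfl hy)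

theorem word_length (n : ℕ) (w : Equiv.Perm (Fin n)) : (word n w).length = n := by
  simp [word]

theorem word_getD (n : ℕ) (w : Equiv.Perm (Fin n)) (i : ℕ) :
    (word n w).getD i 0 = ol n w i := by
  unfold word ol
  split_ifs with h <;> simp [h]

theorem word_nodup (n : ℕ) (w : Equiv.Perm (Fin n)) : (word n w).Nodup :=
  nodup_ofFn.2 fun _ _ h => w.injective (Fin.val_injective h)

theorem word_injective (n : ℕ) : Function.Injective (word n) := fun _ _ h =>
  Equiv.ext fun i => Fin.val_injective (congrFun (ofFn_injective h) i)

theorem exists_word_eq_of_perm {n : ℕ} {w : Equiv.Perm (Fin n)} {x : List ℕ}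
    (h : x ~ word n w) : ∃ u, word n u = x := by
  have hlen : x.length = n := h.length_eq.trans (word_length n w)
  have hlt : ∀ v ∈ x, v < n := fun v hv => by
    obtain ⟨i, rfl⟩ := mem_ofFn.1 (h.subset hv)
    exact (w i).isLt
  let f : Fin n → Fin n := fun i => ⟨x[(i : ℕ)], hlt _ (getElem_mem _)⟩
  have hf : Function.Injective f := fun i j hij =>
    Fin.val_injective ((h.nodup_iff.2 (word_nodup n w)).getElem_inj_iff.1 (congrArg Fin.val hij))
  refine ⟨Equiv.ofBijective f hf.bijective_of_finite,
    ext_getElem (by rw [word_length, hlen]) ?_⟩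
  intro i _ _
  simp [word, f]

theorem hopEquiv_iff (n : ℕ) (a b : Equiv.Perm (Fin n)) :
    hopEquiv n a b ↔ listHopEquiv (word n a) (word n b) :=
  Relation.EqvGen.comap_iff (word_injective n) fun _ _ h =>
    exists_word_eq_of_perm (listHopEquiv.perm h).symm

theorem des_eq_listDes (n : ℕ) (w : Equiv.Perm (Fin n)) : des n w = listDes (word n w) := by
  simp only [des, DesSet, listDes_eq_card, word_length, word_getD]

theorem olb_eq (n : ℕ) (w : Equiv.Perm (Fin n)) (i : ℕ) :
    olb n w i = if 1 ≤ i ∧ i ≤ n then (ol n w (i - 1) : ℕ∞) else ⊤ := by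
  unfold olb ol
  split_ifs <;> first | rfl | omega

theorem isPeak_iff (n : ℕ) (w : Equiv.Perm (Fin n)) (i : ℕ) :
    IsPeak n w i ↔ ∃ k, i = k + 2 ∧ k + 2 < n ∧
      ol n w k < ol n w (k + 1) ∧ ol n w (k + 2) < ol n w (k + 1) := by
  rw [IsPeak, olb_eq, olb_eq, olb_eq]
  rcases i with _ | _ | k
  · simp
  · simp
  · simp only [Nat.add_sub_cancel]
    split_ifs <;> simp <;> omega

theorem pk_eq_listPk (n : ℕ) (w : Equiv.Perm (Fin n)) : pk n w = listPk (word n w) := by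
  rw [listPk_eq_card, word_length, pk]
  simp only [word_getD]
  refine card_nbij' (· - 2) (· + 2) ?_ ?_ ?_ ?_ <;> intro i hi <;>
    simp only [coe_filter, Set.mem_ofPred_eq, mem_Icc, Finset.mem_range, isPeak_iff] at hi ⊢
  · obtain ⟨-, k, rfl, hk⟩ := hi
    exact ⟨by omega, by simpa using hk.2⟩
  · exact ⟨by omega, i, rfl, by omega, hi.2⟩
  · obtain ⟨-, k, rfl, -⟩ := hi
    rfl
  · rfl

theorem map_filter_hopEquiv (n : ℕ) (w : Equiv.Perm (Fin n)) :
    (univ.filter (hopEquiv n w)).map ⟨word n, word_injective n⟩ = hopClass (word n w) := by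
  ext x
  simp only [Finset.mem_map, Finset.mem_filter, Finset.mem_univ, true_and,
    Function.Embedding.coeFn_mk, mem_hopClass, hopEquiv_iff]
  refine ⟨fun ⟨u, hu, hx⟩ => hx ▸ hu, fun hx => ?_⟩
  obtain ⟨u, rfl⟩ := exists_word_eq_of_perm hx.perm.symm
  exact ⟨u, hx, rfl⟩

theorem hop_class_sum (n : ℕ) (w : Equiv.Perm (Fin n)) :
    ∑ u ∈ Finset.univ.filter (fun u => hopEquiv n w u),
        (X : Polynomial ℕ) ^ des n u =
      (X : Polynomial ℕ) ^ pk n w * (1 + X) ^ (n - 1 - 2 * pk n w) := by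
  calc ∑ u ∈ univ.filter (hopEquiv n w), (X : ℕ[X]) ^ des n u
      = ∑ x ∈ hopClass (word n w), (X : ℕ[X]) ^ listDes x := by
        rw [← map_filter_hopEquiv, sum_map]
        simp only [Function.Embedding.coeFn_mk, des_eq_listDes]
    _ = X ^ pk n w * (1 + X) ^ (n - 1 - 2 * pk n w) := by
        rw [sum_hopClass _ (word_nodup n w), pk_eq_listPk, word_length]
end
end
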